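/- arXiv:1208.2654 — 7 statements merged into one kernel-verified Lean document; each statement's English description precedes it below -/
import Mathlib

section
/- For every pWF net N, if the transition-completion tc(N) is *-sound then N is *-sound. -/
structure Net where
  P : Finset ℕ
  T : Finset ℕ
  F : Finset (ℕ × ℕ)
  I : Finset ℕ
  O : Finset ℕ

namespace Net

def nodes (N : Net) : Finset ℕ := N.P ∪ N.T

def IsPetri (N : Net) : Prop :=
  Disjoint N.P N.T ∧ ∀ e ∈ N.F, (e.1 ∈ N.P ∧ e.2 ∈ N.T) ∨ (e.1 ∈ N.T ∧ e.2 ∈ N.P)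

def edge (N : Net) (x y : ℕ) : Prop := (x, y) ∈ N.F

def pathReach (N : Net) : ℕ → ℕ → Prop := Relation.ReflTransGen N.edge

def Connected (N : Net) : Prop :=
  (∀ x ∈ N.nodes, ∃ i ∈ N.I, N.pathReach i x) ∧
  (∀ x ∈ N.nodes, ∃ o ∈ N.O, N.pathReach x o)

/-- place workflow net -/
def IsPWF (N : Net) : Prop :=
  N.IsPetri ∧ N.I ⊆ N.P ∧ N.O ⊆ N.P ∧ N.I.Nonempty ∧ N.O.Nonempty ∧ N.Connected

/-- transition workflow net -/
def IsTWF (N : Net) : Prop :=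
  N.IsPetri ∧ N.I ⊆ N.T ∧ N.O ⊆ N.T ∧ N.I.Nonempty ∧ N.O.Nonempty ∧ N.Connected

def IsWF (N : Net) : Prop := N.IsPWF ∨ N.IsTWF

abbrev Marking := ℕ → ℕ

def pre (N : Net) (t : ℕ) : Marking := fun p => if (p, t) ∈ N.F then 1 else 0
def post (N : Net) (t : ℕ) : Marking := fun p => if (t, p) ∈ N.F then 1 else 0
def enabled (N : Net) (t : ℕ) (m : Marking) : Prop := t ∈ N.T ∧ N.pre t ≤ m
def fire (N : Net) (t : ℕ) (m : Marking) : Marking := fun p => m p - N.pre t p + N.post t p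
def stepRel (N : Net) (m m' : Marking) : Prop := ∃ t, N.enabled t m ∧ m' = N.fire t m
def reach (N : Net) : Marking → Marking → Prop := Relation.ReflTransGen N.stepRel

/-- the marking with `k` tokens on each element of `S` -/
def bag (k : ℕ) (S : Finset ℕ) : Marking := fun p => if p ∈ S then k else 0

def kSound (N : Net) (k : ℕ) : Prop :=
  ∀ m, N.reach (bag k N.I) m → N.reach m (bag k N.O)

def starSound (N : Net) : Prop := ∀ k, 1 ≤ k → N.kSound k

def subSound (N : Net) : Prop :=
  ∀ k k' : ℕ, k' ≤ k → ∀ m : Marking,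
    N.reach (bag k N.I) (m + bag k' N.O) → N.reach m (bag (k - k') N.O)

/-- place completion of a tWF net -/
def pc (N : Net) (pi po : ℕ) : Net where
  P := insert pi (insert po N.P)
  T := N.T
  F := (N.I.image fun t => (pi, t)) ∪ (N.O.image fun t => (t, po)) ∪ N.F
  I := {pi}
  O := {po}

/-- transition completion of a pWF net -/
def tc (N : Net) (t_i t_o : ℕ) : Net where
  P := N.P
  T := insert t_i (insert t_o N.T)
  F := (N.I.image fun p => (t_i, p)) ∪ (N.O.image fun p => (p, t_o)) ∪ N.F
  I := {t_i}
  O := {t_o}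

/-- *-soundness of a tWF net: its place completion (for fresh names) is *-sound -/
def tStarSound (N : Net) : Prop :=
  ∀ pi po : ℕ, pi ∉ N.nodes → po ∉ N.nodes → pi ≠ po → (N.pc pi po).starSound

/-- sub-soundness of a tWF net: its place completion (for fresh names) is sub-sound -/
def tSubSound (N : Net) : Prop :=
  ∀ pi po : ℕ, pi ∉ N.nodes → po ∉ N.nodes → pi ≠ po → (N.pc pi po).subSound

/-- preset of a node, as a finset -/
def inEdges (N : Net) (n : ℕ) : Finset ℕ := (N.F.filter fun e => e.2 = n).image Prod.fst
/-- postset of a node, as a finset -/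
def outEdges (N : Net) (n : ℕ) : Finset ℕ := (N.F.filter fun e => e.1 = n).image Prod.snd

/-- substitution of the node `n` of `N` by the net `M` (place or transition substitution,
depending on the type of `n`): each input node of `M` inherits the preset of `n`, each
output node of `M` inherits the postset of `n`. -/
def subst (N : Net) (n : ℕ) (M : Net) : Net where
  P := (N.P.erase n) ∪ M.P
  T := (N.T.erase n) ∪ M.T
  F := (N.F.filter fun e => e.1 ≠ n ∧ e.2 ≠ n) ∪ M.F
        ∪ (N.inEdges n ×ˢ M.I) ∪ (M.O ×ˢ N.outEdges n)
  I := if n ∈ N.I then (N.I.erase n) ∪ M.I else N.I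
  O := if n ∈ N.O then (N.O.erase n) ∪ M.O else N.O

def Acyclic (N : Net) : Prop := ∀ x, ¬ Relation.TransGen N.edge x x

/-- AND net condition (on top of being a WF net) -/
def IsAND (N : Net) : Prop :=
  N.Acyclic ∧ ∀ p ∈ N.P,
    ((p ∈ N.I ∧ (N.inEdges p).card = 0) ∨ (p ∉ N.I ∧ (N.inEdges p).card = 1)) ∧
    ((p ∈ N.O ∧ (N.outEdges p).card = 0) ∨ (p ∉ N.O ∧ (N.outEdges p).card = 1))

/-- OR net condition (on top of being a WF net) -/
def IsOR (N : Net) : Prop :=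
  ∀ t ∈ N.T,
    ((t ∈ N.I ∧ (N.inEdges t).card = 0) ∨ (t ∉ N.I ∧ (N.inEdges t).card = 1)) ∧
    ((t ∈ N.O ∧ (N.outEdges t).card = 0) ∨ (t ∉ N.O ∧ (N.outEdges t).card = 1))

end Net

/-!
The completion `M = pc (tc N t_i t_o) p_i p_o` adds a transition `t_i` from a fresh place `p_i` to
the inputs of `N` and a transition `t_o` from the outputs of `N` to a fresh place `p_o`. A run of
`N` from `k.I` becomes a run of `M` from `k.p_i` after firing `t_i` `k` times, so *-soundness of
`M` leads it on to `k.p_o`. Conversely, moving the tokens of `p_o` back onto every output place of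
`N` projects runs of `M` in which `p_i` stays empty onto runs of `N`: `t_i` never fires, firing `t_o`
is invisible, and every other transition acts as in `N`.
-/

namespace Net

theorem fire_eq (N : Net) (t : ℕ) (m : Marking) : N.fire t m = m - N.pre t + N.post t := rfl

theorem fire_add_pre (N : Net) (t : ℕ) (m : Marking) : N.fire t (m + N.pre t) = m + N.post t := by
  rw [fire_eq, add_tsub_cancel_right]

theorem reach_add_nsmul_pre {N : Net} {t : ℕ} (ht : t ∈ N.T) (j : ℕ) (m : Marking) :
    N.reach (m + j • N.pre t) (m + j • N.post t) := by
  induction j generalizing m with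
  | zero => simp only [zero_smul, add_zero]; exact Relation.ReflTransGen.refl
  | succ j ih =>
    have hstep : N.stepRel (m + j • N.pre t + N.pre t) (m + j • N.pre t + N.post t) :=
      ⟨t, ⟨ht, le_add_self⟩, (fire_add_pre N t _).symm⟩
    have hrest := ih (m + N.post t)
    rw [add_right_comm m, add_right_comm m (N.post t)] at hrest
    rw [succ_nsmul, succ_nsmul, ← add_assoc, ← add_assoc]
    exact Relation.ReflTransGen.head hstep hrest

theorem reach_apply_le {N : Net} {p : ℕ} (hp : ∀ t ∈ N.T, N.post t p = 0) {m m' : Marking}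
    (h : N.reach m m') : m' p ≤ m p := by
  induction h with
  | refl => rfl
  | tail _ hstep ih =>
    obtain ⟨t, ⟨ht, _⟩, rfl⟩ := hstep
    simpa [fire_eq, hp t ht] using (Nat.sub_le _ _).trans ih

theorem reach_map_of_stepRel {M N : Net} {m₀ m : Marking} (φ : Marking → Marking)
    (hstep : ∀ m₁ m₂, M.reach m₀ m₁ → M.stepRel m₁ m₂ → N.reach (φ m₁) (φ m₂))
    (h : M.reach m₀ m) : N.reach (φ m₀) (φ m) := by
  induction h with
  | refl => exact Relation.ReflTransGen.refl
  | tail h₁ h₂ ih => exact ih.trans (hstep _ _ h₁ h₂)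

theorem reach_mono {M N : Net} (hT : N.T ⊆ M.T) (hpre : ∀ t ∈ N.T, M.pre t = N.pre t)
    (hpost : ∀ t ∈ N.T, M.post t = N.post t) {m m' : Marking} (h : N.reach m m') :
    M.reach m m' := by
  refine Relation.ReflTransGen.mono ?_ m m' h
  rintro m₁ _ ⟨t, ⟨ht, hle⟩, rfl⟩
  exact ⟨t, ⟨hT ht, hpre t ht ▸ hle⟩, by rw [fire_eq, fire_eq, hpre t ht, hpost t ht]⟩

theorem IsPetri.mem_nodes_of_mem_F {N : Net} (hN : N.IsPetri) {x y : ℕ} (h : (x, y) ∈ N.F) :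
    x ∈ N.nodes ∧ y ∈ N.nodes := by
  rcases hN.2 _ h with ⟨hx, hy⟩ | ⟨hx, hy⟩ <;> simp [nodes, hx, hy]

theorem IsPetri.pre_apply_eq_zero {N : Net} (hN : N.IsPetri) {p : ℕ} (hp : p ∉ N.nodes) (t : ℕ) :
    N.pre t p = 0 :=
  if_neg fun h => hp (hN.mem_nodes_of_mem_F h).1

theorem IsPetri.post_apply_eq_zero {N : Net} (hN : N.IsPetri) {p : ℕ} (hp : p ∉ N.nodes) (t : ℕ) :
    N.post t p = 0 :=
  if_neg fun h => hp (hN.mem_nodes_of_mem_F h).2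

theorem notMem_of_notMem_nodes {N : Net} {S : Finset ℕ} (hS : S ⊆ N.P) {p : ℕ}
    (hp : p ∉ N.nodes) : p ∉ S :=
  fun h => hp (Finset.mem_union_left _ (hS h))

theorem IsPetri.reach_apply_eq_zero {N : Net} (hN : N.IsPetri) {S : Finset ℕ} (hS : S ⊆ N.P)
    {k p : ℕ} {m : Marking} (hm : N.reach (bag k S) m) (hp : p ∉ N.nodes) : m p = 0 := by
  simpa [bag, notMem_of_notMem_nodes hS hp] using
    reach_apply_le (fun t _ => hN.post_apply_eq_zero hp t) hm

theorem nsmul_bag_one (j : ℕ) (S : Finset ℕ) : j • bag 1 S = bag j S := by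
  funext p; simp [bag]

theorem pre_eq_bag_one {N : Net} {t : ℕ} {S : Finset ℕ} (h : ∀ p, (p, t) ∈ N.F ↔ p ∈ S) :
    N.pre t = bag 1 S := by
  funext p; simp [pre, bag, h]

theorem post_eq_bag_one {N : Net} {t : ℕ} {S : Finset ℕ} (h : ∀ p, (t, p) ∈ N.F ↔ p ∈ S) :
    N.post t = bag 1 S := by
  funext p; simp [post, bag, h]

def restoreOutput (po : ℕ) (O : Finset ℕ) (m : Marking) : Marking :=
  Function.update m po 0 + bag (m po) O

section restoreOutput

variable {po : ℕ} {O : Finset ℕ}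

theorem restoreOutput_of_apply_eq_zero {m : Marking} (h : m po = 0) :
    restoreOutput po O m = m := by
  funext p; by_cases hp : p = po <;> simp [restoreOutput, bag, hp, h]

theorem restoreOutput_bag_singleton (hpo : po ∉ O) (k : ℕ) :
    restoreOutput po O (bag k {po}) = bag k O := by
  funext p
  by_cases hp : p = po
  · subst hp; simp [restoreOutput, bag, hpo]
  · simp [restoreOutput, bag, hp]

theorem restoreOutput_sub_add_bag (hpo : po ∉ O) {m : Marking} (hle : bag 1 O ≤ m) :
    restoreOutput po O (m - bag 1 O + bag 1 {po}) = restoreOutput po O m := by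
  funext p
  have := hle p
  by_cases hp : p = po
  · subst hp; simp_all [restoreOutput, bag]
  · by_cases hpO : p ∈ O <;> simp_all [restoreOutput, bag]
    omega

theorem enabled_restoreOutput {N : Net} {t : ℕ} {m : Marking} (h : N.enabled t m)
    (hpre : N.pre t po = 0) : N.enabled t (restoreOutput po O m) := by
  refine ⟨h.1, fun p => ?_⟩
  by_cases hp : p = po
  · subst hp; simp [hpre]
  · simpa [restoreOutput, Function.update_apply, hp] using le_add_right (h.2 p)

theorem restoreOutput_fire {N : Net} {t : ℕ} {m : Marking} (h : N.pre t ≤ m)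
    (hpre : N.pre t po = 0) (hpost : N.post t po = 0) :
    restoreOutput po O (N.fire t m) = N.fire t (restoreOutput po O m) := by
  funext p
  have hle : N.pre t p ≤ m p := h p
  by_cases hp : p = po
  · subst hp; simp [restoreOutput, fire, bag, hpre, hpost]
  · simp [restoreOutput, fire, hp, hpre, hpost]; omega

end restoreOutput

structure IsCompletion (M N : Net) (t_i t_o p_i p_o : ℕ) : Prop where
  T_eq : M.T = insert t_i (insert t_o N.T)
  pre_in : M.pre t_i = bag 1 {p_i}
  post_in : M.post t_i = bag 1 N.I
  pre_out : M.pre t_o = bag 1 N.O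
  post_out : M.post t_o = bag 1 {p_o}
  pre_of_mem : ∀ t ∈ N.T, M.pre t = N.pre t
  post_of_mem : ∀ t ∈ N.T, M.post t = N.post t

namespace IsCompletion

variable {M N : Net} {t_i t_o p_i p_o : ℕ}

theorem reach_of_reach_bag_I (hc : IsCompletion M N t_i t_o p_i p_o) {k : ℕ} {m : Marking}
    (hm : N.reach (bag k N.I) m) : M.reach (bag k {p_i}) m := by
  have hT : N.T ⊆ M.T := fun t ht => by simp [hc.T_eq, ht]
  have hfill := reach_add_nsmul_pre (N := M) (t := t_i) (by simp [hc.T_eq]) k 0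
  rw [hc.pre_in, hc.post_in, nsmul_bag_one, nsmul_bag_one, zero_add, zero_add] at hfill
  exact hfill.trans (reach_mono hT hc.pre_of_mem hc.post_of_mem hm)

theorem post_apply_p_i_eq_zero (hc : IsCompletion M N t_i t_o p_i p_o) (hN : N.IsPetri)
    (hp_i : p_i ∉ N.nodes) (hp_iI : p_i ∉ N.I) (hne : p_i ≠ p_o) :
    ∀ t ∈ M.T, M.post t p_i = 0 := by
  intro t ht
  rw [hc.T_eq] at ht
  rcases Finset.mem_insert.1 ht with rfl | ht
  · simp [hc.post_in, bag, hp_iI]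
  rcases Finset.mem_insert.1 ht with rfl | ht
  · simp [hc.post_out, bag, hne]
  · rw [hc.post_of_mem t ht, hN.post_apply_eq_zero hp_i]

theorem reach_bag_O_of_reach (hc : IsCompletion M N t_i t_o p_i p_o) (hN : N.IsPetri)
    (hp_i : p_i ∉ N.nodes) (hp_o : p_o ∉ N.nodes) (hp_iI : p_i ∉ N.I) (hp_oO : p_o ∉ N.O)
    (hne : p_i ≠ p_o) {k : ℕ} {m : Marking} (hm : M.reach m (bag k {p_o}))
    (hm_i : m p_i = 0) (hm_o : m p_o = 0) : N.reach m (bag k N.O) := by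
  rw [← restoreOutput_of_apply_eq_zero (O := N.O) hm_o, ← restoreOutput_bag_singleton hp_oO]
  refine reach_map_of_stepRel _ (fun m₁ m₂ h₁ => ?_) hm
  have hm₁ : m₁ p_i = 0 :=
    Nat.le_zero.1 (hm_i ▸ reach_apply_le (hc.post_apply_p_i_eq_zero hN hp_i hp_iI hne) h₁)
  rintro ⟨t, ⟨ht, hle⟩, rfl⟩
  rw [hc.T_eq] at ht
  rcases Finset.mem_insert.1 ht with rfl | ht
  · have := hle p_i
    simp [hc.pre_in, bag, hm₁] at this
  rcases Finset.mem_insert.1 ht with rfl | ht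
  · rw [fire_eq, hc.pre_out, hc.post_out, restoreOutput_sub_add_bag hp_oO (hc.pre_out ▸ hle)]
    exact Relation.ReflTransGen.refl
  · have hpre := hN.pre_apply_eq_zero hp_o t
    have hfire : M.fire t m₁ = N.fire t m₁ := by
      rw [fire_eq, fire_eq, hc.pre_of_mem t ht, hc.post_of_mem t ht]
    have hen : N.enabled t m₁ := ⟨ht, hc.pre_of_mem t ht ▸ hle⟩
    rw [hfire, restoreOutput_fire hen.2 hpre (hN.post_apply_eq_zero hp_o t)]
    exact Relation.ReflTransGen.single ⟨t, enabled_restoreOutput hen hpre, rfl⟩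

end IsCompletion

theorem nodes_subset_tc_nodes (N : Net) (t_i t_o : ℕ) : N.nodes ⊆ (N.tc t_i t_o).nodes := by
  intro x
  simp only [nodes, tc, Finset.mem_union, Finset.mem_insert]
  tauto

theorem mem_pc_tc_F {N : Net} {t_i t_o p_i p_o x y : ℕ} :
    (x, y) ∈ ((N.tc t_i t_o).pc p_i p_o).F ↔ (x = p_i ∧ y = t_i) ∨ (x = t_o ∧ y = p_o) ∨
      (x = t_i ∧ y ∈ N.I) ∨ (x ∈ N.O ∧ y = t_o) ∨ (x, y) ∈ N.F := by
  simp only [pc, tc, Finset.mem_union, Finset.mem_image, Finset.mem_singleton, Prod.mk.injEq]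
  aesop

theorem isCompletion_pc_tc {N : Net} {t_i t_o p_i p_o : ℕ} (hN : N.IsPetri) (hI : N.I ⊆ N.P)
    (hO : N.O ⊆ N.P) (hti : t_i ∉ N.nodes) (hto : t_o ∉ N.nodes) (hne : t_i ≠ t_o)
    (hp_i : p_i ∉ (N.tc t_i t_o).nodes) (hp_o : p_o ∉ (N.tc t_i t_o).nodes) :
    IsCompletion ((N.tc t_i t_o).pc p_i p_o) N t_i t_o p_i p_o := by
  have hfresh : ∀ {x}, x ∉ N.nodes → ∀ y, (x, y) ∉ N.F ∧ (y, x) ∉ N.F := fun hx _ =>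
    ⟨fun h => hx (hN.mem_nodes_of_mem_F h).1, fun h => hx (hN.mem_nodes_of_mem_F h).2⟩
  have hti_F := hfresh hti
  have hto_F := hfresh hto
  simp only [tc, nodes, Finset.mem_union, Finset.mem_insert, not_or] at hti hto hp_i hp_o
  have hI' : ∀ x ∈ N.I, x ∈ N.P := fun _ h => hI h
  have hO' : ∀ x ∈ N.O, x ∈ N.P := fun _ h => hO h
  have hPT : ∀ x ∈ N.P, x ∉ N.T := fun _ h => Finset.disjoint_left.1 hN.1 h
  refine ⟨rfl, pre_eq_bag_one fun p => ?_, post_eq_bag_one fun p => ?_,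
    pre_eq_bag_one fun p => ?_, post_eq_bag_one fun p => ?_, fun t ht => ?_, fun t ht => ?_⟩
  all_goals try (funext p; refine if_congr ?_ rfl rfl)
  all_goals simp only [mem_pc_tc_F, Finset.mem_singleton]
  all_goals aesop

end Net

theorem stmt3 (N : Net) (hN : N.IsPWF) (t_i t_o : ℕ)
    (hti : t_i ∉ N.nodes) (hto : t_o ∉ N.nodes) (hne : t_i ≠ t_o)
    (h : (N.tc t_i t_o).tStarSound) : N.starSound := by
  obtain ⟨hPetri, hI, hO, -, -, -⟩ := hN
  intro k hk m hm
  obtain ⟨p_i, hp_i⟩ := Infinite.exists_notMem_finset (N.tc t_i t_o).nodes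
  obtain ⟨p_o, hp_o⟩ := Infinite.exists_notMem_finset (insert p_i (N.tc t_i t_o).nodes)
  rw [Finset.mem_insert, not_or] at hp_o
  have hc := Net.isCompletion_pc_tc hPetri hI hO hti hto hne hp_i hp_o.2
  have hp_iN : p_i ∉ N.nodes := fun h => hp_i (N.nodes_subset_tc_nodes t_i t_o h)
  have hp_oN : p_o ∉ N.nodes := fun h => hp_o.2 (N.nodes_subset_tc_nodes t_i t_o h)
  have hp_iI : p_i ∉ N.I := Net.notMem_of_notMem_nodes hI hp_iN
  have hp_oO : p_o ∉ N.O := Net.notMem_of_notMem_nodes hO hp_oN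
  have hsound := h p_i p_o hp_i hp_o.2 (Ne.symm hp_o.1) k hk m (hc.reach_of_reach_bag_I hm)
  exact hc.reach_bag_O_of_reach hPetri hp_iN hp_oN hp_iI hp_oO (Ne.symm hp_o.1) hsound
    (hPetri.reach_apply_eq_zero hI hm hp_iN) (hPetri.reach_apply_eq_zero hI hm hp_oN)
end

section
/- There exists a *-sound pWF net N such that its transition-completion tc(N) is not *-sound (indeed not 1-sound). -/
namespace Net
def myN : Net := ⟨{0,1,2},{3,4},{(0,3),(3,1),(3,2),(1,4),(2,4),(4,2)},{0},{2}⟩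

lemma myN_pre3 : myN.pre 3 = fun p => if p = 0 then 1 else 0 := by
  funext p
  simp only [pre, myN, Finset.mem_insert, Finset.mem_singleton, Prod.mk.injEq]
  by_cases h : p = 0 <;> simp [h] <;> omega

lemma myN_post3 : myN.post 3 = fun p => if p = 1 ∨ p = 2 then 1 else 0 := by
  funext p
  simp only [post, myN, Finset.mem_insert, Finset.mem_singleton, Prod.mk.injEq]
  by_cases h : p = 1 <;> by_cases h2 : p = 2 <;> simp [h, h2] <;> omega

lemma myN_pre4 : myN.pre 4 = fun p => if p = 1 ∨ p = 2 then 1 else 0 := by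
  funext p
  simp only [pre, myN, Finset.mem_insert, Finset.mem_singleton, Prod.mk.injEq]
  by_cases h : p = 1 <;> by_cases h2 : p = 2 <;> simp [h, h2] <;> omega

lemma myN_post4 : myN.post 4 = fun p => if p = 2 then 1 else 0 := by
  funext p
  simp only [post, myN, Finset.mem_insert, Finset.mem_singleton, Prod.mk.injEq]
  by_cases h : p = 2 <;> simp [h] <;> omega
end Net
namespace Net
def Inv (k : ℕ) (m : Marking) : Prop :=
  m 0 + m 2 = k ∧ m 1 ≤ m 2 ∧ ∀ p, p ≠ 0 → p ≠ 1 → p ≠ 2 → m p = 0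

lemma inv_step {k : ℕ} {m m' : Marking} (h : Inv k m) (hs : myN.stepRel m m') :
    Inv k m' := by
  obtain ⟨t, ⟨htT, hle⟩, rfl⟩ := hs
  obtain ⟨h1, h2, h3⟩ := h
  have htT' : t = 3 ∨ t = 4 := by simpa [myN] using htT
  rcases htT' with rfl | rfl
  · have h0 := hle 0
    rw [myN_pre3] at h0
    simp at h0
    refine ⟨?_, ?_, ?_⟩ <;> simp [fire, myN_pre3, myN_post3]
    · omega
    · omega
    · intro p hp0 hp1 hp2
      simp [hp0, hp1, hp2, h3 p hp0 hp1 hp2]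
  · have h0 := hle 1
    have h0' := hle 2
    rw [myN_pre4] at h0 h0'
    simp at h0 h0'
    refine ⟨?_, ?_, ?_⟩ <;> simp [fire, myN_pre4, myN_post4]
    · omega
    · omega
    · intro p hp0 hp1 hp2
      simp [hp0, hp1, hp2, h3 p hp0 hp1 hp2]

lemma phase2 {k : ℕ} : ∀ b (m : Marking), Inv k m → m 0 = 0 → m 1 = b →
    myN.reach m (bag k {2}) := by
  intro b
  induction b with
  | zero =>
    intro m ⟨h1, h2, h3⟩ h0 hb
    have : m = bag k {2} := by
      funext p
      by_cases hp0 : p = 0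
      · simp [bag, hp0]; omega
      · by_cases hp1 : p = 1
        · simp [bag, hp1]; omega
        · by_cases hp2 : p = 2
          · simp [bag, hp2]; omega
          · simp [bag, hp2, h3 p hp0 hp1 hp2]
    rw [this]; exact Relation.ReflTransGen.refl
  | succ b ih =>
    intro m hinv h0 hb
    obtain ⟨h1, h2, h3⟩ := hinv
    have hen : myN.enabled 4 m := by
      refine ⟨by simp [myN], ?_⟩
      intro p
      rw [myN_pre4]
      by_cases hp1 : p = 1
      · simp [hp1]; omega
      · by_cases hp2 : p = 2
        · simp [hp1, hp2]; omega
        · simp [hp1, hp2]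
    have hstep : myN.stepRel m (myN.fire 4 m) := ⟨4, hen, rfl⟩
    refine Relation.ReflTransGen.head hstep (ih _ (inv_step ⟨h1, h2, h3⟩ hstep) ?_ ?_)
    · simp [fire, myN_pre4, myN_post4]; omega
    · simp [fire, myN_pre4, myN_post4]; omega

lemma phase1 {k : ℕ} : ∀ a (m : Marking), Inv k m → m 0 = a →
    myN.reach m (bag k {2}) := by
  intro a
  induction a with
  | zero => intro m hinv h0; exact phase2 (m 1) m hinv h0 rfl
  | succ a ih =>
    intro m hinv h0
    obtain ⟨h1, h2, h3⟩ := hinv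
    have hen : myN.enabled 3 m := by
      refine ⟨by simp [myN], ?_⟩
      intro p
      rw [myN_pre3]
      by_cases hp0 : p = 0
      · simp [hp0]; omega
      · simp [hp0]
    have hstep : myN.stepRel m (myN.fire 3 m) := ⟨3, hen, rfl⟩
    refine Relation.ReflTransGen.head hstep (ih _ (inv_step ⟨h1, h2, h3⟩ hstep) ?_)
    simp [fire, myN_pre3, myN_post3]; omega

lemma myN_starSound : myN.starSound := by
  intro k _ m hm
  have hinv : Inv k m := by
    induction hm with
    | refl =>
      refine ⟨?_, ?_, ?_⟩ <;> simp [bag, myN]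
      intro p h0 _ _; simp [h0]
    | tail _ hstep ih => exact inv_step ih hstep
  exact phase1 (m 0) m hinv rfl
end Net
namespace Net
lemma myN_edge : ∀ x y, (x,y) ∈ myN.F → myN.edge x y := fun _ _ h => h

lemma myN_pwf : myN.IsPWF := by
  refine ⟨⟨by decide, by decide⟩, by decide, by decide, by decide, by decide, ?_, ?_⟩
  · intro x hx
    refine ⟨0, by decide, ?_⟩
    have hx' : x = 3 ∨ x = 0 ∨ x = 1 ∨ x = 2 ∨ x = 4 := by simpa [nodes, myN] using hx
    have e03 : myN.edge 0 3 := by simp [edge, myN]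
    have e31 : myN.edge 3 1 := by simp [edge, myN]
    have e32 : myN.edge 3 2 := by simp [edge, myN]
    have e14 : myN.edge 1 4 := by simp [edge, myN]
    rcases hx' with rfl | rfl | rfl | rfl | rfl
    · exact .single e03
    · exact .refl
    · exact .head e03 (.single e31)
    · exact .head e03 (.single e32)
    · exact .head e03 (.head e31 (.single e14))
  · intro x hx
    refine ⟨2, by decide, ?_⟩
    have hx' : x = 3 ∨ x = 0 ∨ x = 1 ∨ x = 2 ∨ x = 4 := by simpa [nodes, myN] using hx
    have e03 : myN.edge 0 3 := by simp [edge, myN]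
    have e32 : myN.edge 3 2 := by simp [edge, myN]
    have e14 : myN.edge 1 4 := by simp [edge, myN]
    have e42 : myN.edge 4 2 := by simp [edge, myN]
    rcases hx' with rfl | rfl | rfl | rfl | rfl
    · exact .single e32
    · exact .head e03 (.single e32)
    · exact .head e14 (.single e42)
    · exact .refl
    · exact .single e42
end Net
namespace Net
lemma bigF (t_i t_o pi po : ℕ) : ∀ x y : ℕ, ((x, y) ∈ ((myN.tc t_i t_o).pc pi po).F) ↔
      (x = pi ∧ y = t_i) ∨ (x = t_o ∧ y = po) ∨ (x = t_i ∧ y = 0) ∨ (x = 2 ∧ y = t_o) ∨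
      (x = 0 ∧ y = 3) ∨ (x = 3 ∧ y = 1) ∨ (x = 3 ∧ y = 2) ∨ (x = 1 ∧ y = 4) ∨
      (x = 2 ∧ y = 4) ∨ (x = 4 ∧ y = 2) := by
  intro x y
  simp only [pc, tc, myN, Finset.mem_union, Finset.mem_image, Finset.mem_insert,
    Finset.mem_singleton, Prod.mk.injEq, exists_eq_left]
  constructor
  · rintro ((⟨rfl, rfl⟩ | ⟨rfl, rfl⟩) | (⟨rfl, rfl⟩ | ⟨rfl, rfl⟩) | h)
    · exact Or.inl ⟨rfl, rfl⟩
    · exact Or.inr (Or.inl ⟨rfl, rfl⟩)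
    · exact Or.inr (Or.inr (Or.inl ⟨rfl, rfl⟩))
    · exact Or.inr (Or.inr (Or.inr (Or.inl ⟨rfl, rfl⟩)))
    · exact Or.inr (Or.inr (Or.inr (Or.inr h)))
  · rintro (⟨rfl, rfl⟩ | ⟨rfl, rfl⟩ | ⟨rfl, rfl⟩ | ⟨rfl, rfl⟩ | h)
    · exact Or.inl (Or.inl ⟨rfl, rfl⟩)
    · exact Or.inl (Or.inr ⟨rfl, rfl⟩)
    · exact Or.inr (Or.inl (Or.inl ⟨rfl, rfl⟩))
    · exact Or.inr (Or.inl (Or.inr ⟨rfl, rfl⟩))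
    · exact Or.inr (Or.inr h)

lemma bigT (t_i t_o pi po : ℕ) : ∀ t, t ∈ ((myN.tc t_i t_o).pc pi po).T ↔
    (t = t_i ∨ t = t_o ∨ t = 3 ∨ t = 4) := by
  intro t; simp [pc, tc, myN]
end Net
open Net in
theorem stmt4 : ∃ N : Net, N.IsPWF ∧ N.starSound ∧
    ∀ t_i t_o : ℕ, t_i ∉ N.nodes → t_o ∉ N.nodes → t_i ≠ t_o →
      ∀ pi po : ℕ, pi ∉ (N.tc t_i t_o).nodes → po ∉ (N.tc t_i t_o).nodes → pi ≠ po →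
        ¬ ((N.tc t_i t_o).pc pi po).kSound 1 := by
  refine ⟨myN, myN_pwf, myN_starSound, ?_⟩
  intro t_i t_o hti hto htne pi po hpi hpo hpne
  simp only [nodes, tc, myN, Finset.mem_union, Finset.mem_insert, Finset.mem_singleton,
    not_or] at hti hto hpi hpo
  intro hk
  set M := (myN.tc t_i t_o).pc pi po with hM
  have hF := bigF t_i t_o pi po
  have hT := bigT t_i t_o pi po
  have mem_pti : ∀ p, ((p, t_i) ∈ M.F) ↔ p = pi := by
    intro p
    rw [hF]
    constructor
    · rintro (h|h|h|h|h|h|h|h|h|h) <;> omega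
    · rintro rfl; exact Or.inl ⟨rfl, rfl⟩
  have mem_tip : ∀ p, ((t_i, p) ∈ M.F) ↔ p = 0 := by
    intro p
    rw [hF]
    constructor
    · rintro (h|h|h|h|h|h|h|h|h|h) <;> omega
    · rintro rfl; exact Or.inr (Or.inr (Or.inl ⟨rfl, rfl⟩))
  have mem_p3 : ∀ p, ((p, 3) ∈ M.F) ↔ p = 0 := by
    intro p
    rw [hF]
    constructor
    · rintro (h|h|h|h|h|h|h|h|h|h) <;> omega
    · rintro rfl; exact Or.inr (Or.inr (Or.inr (Or.inr (Or.inl ⟨rfl, rfl⟩))))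
  have mem_3p : ∀ p, ((3, p) ∈ M.F) ↔ (p = 1 ∨ p = 2) := by
    intro p
    rw [hF]
    constructor
    · rintro (h|h|h|h|h|h|h|h|h|h) <;> omega
    · rintro (rfl | rfl)
      · exact Or.inr (Or.inr (Or.inr (Or.inr (Or.inr (Or.inl ⟨rfl, rfl⟩)))))
      · exact Or.inr (Or.inr (Or.inr (Or.inr (Or.inr (Or.inr (Or.inl ⟨rfl, rfl⟩))))))
  have mem_pto : ∀ p, ((p, t_o) ∈ M.F) ↔ p = 2 := by
    intro p
    rw [hF]
    constructor
    · rintro (h|h|h|h|h|h|h|h|h|h) <;> omega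
    · rintro rfl; exact Or.inr (Or.inr (Or.inr (Or.inl ⟨rfl, rfl⟩)))
  have mem_top : ∀ p, ((t_o, p) ∈ M.F) ↔ p = po := by
    intro p
    rw [hF]
    constructor
    · rintro (h|h|h|h|h|h|h|h|h|h) <;> omega
    · rintro rfl; exact Or.inr (Or.inl ⟨rfl, rfl⟩)
  have mem_p4 : ∀ p, ((p, 4) ∈ M.F) ↔ (p = 1 ∨ p = 2) := by
    intro p
    rw [hF]
    constructor
    · rintro (h|h|h|h|h|h|h|h|h|h) <;> omega
    · rintro (rfl | rfl)
      · exact Or.inr (Or.inr (Or.inr (Or.inr (Or.inr (Or.inr (Or.inr (Or.inl ⟨rfl, rfl⟩)))))))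
      · exact Or.inr (Or.inr (Or.inr (Or.inr (Or.inr (Or.inr (Or.inr (Or.inr (Or.inl ⟨rfl, rfl⟩))))))))
  -- the markings
  have hI : M.I = {pi} := rfl
  have hO : M.O = {po} := rfl
  set m1 : Marking := fun p => if p = 0 then 1 else 0 with hm1
  set m2 : Marking := fun p => if p = 1 ∨ p = 2 then 1 else 0 with hm2
  set m3 : Marking := fun p => if p = 1 ∨ p = po then 1 else 0 with hm3
  -- step 1 : fire t_i
  have s1 : M.stepRel (bag 1 M.I) m1 := by
    refine ⟨t_i, ⟨(hT t_i).2 (Or.inl rfl), ?_⟩, ?_⟩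
    · intro p
      simp only [pre, mem_pti, hI, bag, Finset.mem_singleton]
      split_ifs <;> omega
    · funext p
      simp only [hm1, fire, pre, post, mem_pti, mem_tip, hI, bag, Finset.mem_singleton]
      split_ifs <;> omega
  -- step 2 : fire A = 3
  have s2 : M.stepRel m1 m2 := by
    refine ⟨3, ⟨(hT 3).2 (by omega), ?_⟩, ?_⟩
    · intro p
      simp only [pre, mem_p3, hm1]
      split_ifs <;> omega
    · funext p
      simp only [hm1, hm2, fire, pre, post, mem_p3, mem_3p]
      split_ifs <;> omega
  -- step 3 : fire t_o
  have s3 : M.stepRel m2 m3 := by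
    refine ⟨t_o, ⟨(hT t_o).2 (Or.inr (Or.inl rfl)), ?_⟩, ?_⟩
    · intro p
      simp only [pre, mem_pto, hm2]
      split_ifs <;> omega
    · funext p
      simp only [hm2, hm3, fire, pre, post, mem_pto, mem_top]
      split_ifs <;> omega
  have hreach : M.reach (bag 1 M.I) m3 :=
    Relation.ReflTransGen.head s1 (Relation.ReflTransGen.head s2 (Relation.ReflTransGen.single s3))
  -- m3 is dead
  have hdead : ∀ m', ¬ M.stepRel m3 m' := by
    rintro m' ⟨t, ⟨htT, hle⟩, -⟩
    rcases (hT t).1 htT with hq | hq | hq | hq <;> rw [hq] at hle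
    · have h := hle pi
      rw [show M.pre t_i pi = 1 from by simp [pre, mem_pti],
        show m3 pi = 0 from by simp only [hm3]; exact if_neg (by omega)] at h
      exact (by omega : ¬(1:ℕ) ≤ 0) h
    · have h := hle 2
      rw [show M.pre t_o 2 = 1 from by simp [pre, mem_pto],
        show m3 2 = 0 from by simp only [hm3]; exact if_neg (by omega)] at h
      exact (by omega : ¬(1:ℕ) ≤ 0) h
    · have h := hle 0
      rw [show M.pre 3 0 = 1 from by simp [pre, mem_p3],
        show m3 0 = 0 from by simp only [hm3]; exact if_neg (by omega)] at h
      exact (by omega : ¬(1:ℕ) ≤ 0) h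
    · have h := hle 2
      rw [show M.pre 4 2 = 1 from by simp [pre, mem_p4],
        show m3 2 = 0 from by simp only [hm3]; exact if_neg (by omega)] at h
      exact (by omega : ¬(1:ℕ) ≤ 0) h
  have hback := hk m3 hreach
  rcases Relation.ReflTransGen.cases_head hback with heq | ⟨c, hstep, -⟩
  · have h1 := congrFun heq 1
    rw [show m3 1 = 1 from by simp only [hm3]; exact if_pos (Or.inl trivial), hO] at h1
    simp only [bag, Finset.mem_singleton] at h1
    rw [if_neg (by omega : ¬(1 = po))] at h1
    omega
  · exact hdead c hstep
end

section
/- If N and M are disjoint workflow nets and n is a node of N of the appropriate type (a place if M is a pWF net, a transition if M is a tWF net), then the substitution N ⊗_n M is again a workflow net (of the same kind, pWF or tWF, as N). -/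
/-!
Every path of `N` lifts to `N ⊗_n M`: a step into `n` becomes a step into an input of `M`, a step
out of `n` a step out of an output of `M`, and a visit of `n` is replaced by a path of `M` from an
input to an output, which exists because `M` is connected. Petri-ness survives because the inputs
and outputs of `M` have the type of `n`, so the redirected edges still join a place to a transition.
-/

namespace Net

open Finset

variable {N M : Net} {n a b x i₀ o₀ : ℕ} {A B : Finset ℕ}

lemma mem_inEdges : a ∈ N.inEdges n ↔ (a, n) ∈ N.F := by
  simp [inEdges]

lemma mem_outEdges : b ∈ N.outEdges n ↔ (n, b) ∈ N.F := by
  simp [outEdges]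

lemma mem_subst_P : x ∈ (N.subst n M).P ↔ (x ≠ n ∧ x ∈ N.P) ∨ x ∈ M.P := by
  simp [subst]

lemma mem_subst_T : x ∈ (N.subst n M).T ↔ (x ≠ n ∧ x ∈ N.T) ∨ x ∈ M.T := by
  simp [subst]

lemma mem_subst_nodes : x ∈ (N.subst n M).nodes ↔ (x ≠ n ∧ x ∈ N.nodes) ∨ x ∈ M.nodes := by
  simp only [nodes, mem_union, mem_subst_P, mem_subst_T]
  tauto

lemma mem_subst_F :
    (a, b) ∈ (N.subst n M).F ↔ ((a, b) ∈ N.F ∧ a ≠ n ∧ b ≠ n) ∨ (a, b) ∈ M.F ∨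
      ((a, n) ∈ N.F ∧ b ∈ M.I) ∨ (a ∈ M.O ∧ (n, b) ∈ N.F) := by
  simp [subst, mem_inEdges, mem_outEdges]

lemma mem_subst_I : x ∈ (N.subst n M).I ↔ (x ≠ n ∧ x ∈ N.I) ∨ (n ∈ N.I ∧ x ∈ M.I) := by
  by_cases hn : n ∈ N.I
  · simp [subst, hn]
  · simp only [subst, hn, if_false, false_and, or_false, iff_and_self]
    exact fun hx hxn => hn (hxn ▸ hx)

lemma mem_subst_O : x ∈ (N.subst n M).O ↔ (x ≠ n ∧ x ∈ N.O) ∨ (n ∈ N.O ∧ x ∈ M.O) := by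
  by_cases hn : n ∈ N.O
  · simp [subst, hn]
  · simp only [subst, hn, if_false, false_and, or_false, iff_and_self]
    exact fun hx hxn => hn (hxn ▸ hx)

lemma subst_I_subset (hN : N.I ⊆ A) (hM : n ∈ N.I → M.I ⊆ B) :
    (N.subst n M).I ⊆ A.erase n ∪ B := by
  intro x hx
  rcases mem_subst_I.1 hx with ⟨hxn, hxN⟩ | ⟨hn, hxM⟩
  · exact mem_union_left _ (mem_erase.2 ⟨hxn, hN hxN⟩)
  · exact mem_union_right _ (hM hn hxM)

lemma subst_O_subset (hN : N.O ⊆ A) (hM : n ∈ N.O → M.O ⊆ B) :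
    (N.subst n M).O ⊆ A.erase n ∪ B := by
  intro x hx
  rcases mem_subst_O.1 hx with ⟨hxn, hxN⟩ | ⟨hn, hxM⟩
  · exact mem_union_left _ (mem_erase.2 ⟨hxn, hN hxN⟩)
  · exact mem_union_right _ (hM hn hxM)

lemma subst_I_nonempty (hN : N.I.Nonempty) (hM : M.I.Nonempty) : (N.subst n M).I.Nonempty := by
  by_cases hn : n ∈ N.I
  · obtain ⟨i, hi⟩ := hM
    exact ⟨i, mem_subst_I.2 (.inr ⟨hn, hi⟩)⟩
  · obtain ⟨i, hi⟩ := hN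
    exact ⟨i, mem_subst_I.2 (.inl ⟨fun hin => hn (hin ▸ hi), hi⟩)⟩

lemma subst_O_nonempty (hN : N.O.Nonempty) (hM : M.O.Nonempty) : (N.subst n M).O.Nonempty := by
  by_cases hn : n ∈ N.O
  · obtain ⟨o, ho⟩ := hM
    exact ⟨o, mem_subst_O.2 (.inr ⟨hn, ho⟩)⟩
  · obtain ⟨o, ho⟩ := hN
    exact ⟨o, mem_subst_O.2 (.inl ⟨fun hon => hn (hon ▸ ho), ho⟩)⟩

lemma IsPetri.ne_of_mem_P_of_mem_T (hN : N.IsPetri) (ha : a ∈ N.P) (hb : b ∈ N.T) : a ≠ b :=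
  fun hab => disjoint_left.1 hN.1 ha (hab ▸ hb)

lemma IsPetri.not_edge_self (hN : N.IsPetri) : ¬ N.edge n n := fun h => by
  rcases hN.2 _ h with ⟨hP, hT⟩ | ⟨hT, hP⟩ <;> exact hN.ne_of_mem_P_of_mem_T hP hT rfl

theorem IsPetri.subst (hd : Disjoint N.nodes M.nodes) (hN : N.IsPetri) (hM : M.IsPetri)
    (hP : n ∈ N.P → M.I ⊆ M.P ∧ M.O ⊆ M.P) (hT : n ∈ N.T → M.I ⊆ M.T ∧ M.O ⊆ M.T) :
    (N.subst n M).IsPetri := by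
  refine ⟨disjoint_left.2 fun x hxP hxT => ?_, fun ⟨a, b⟩ hab => ?_⟩
  · rcases mem_subst_P.1 hxP with ⟨-, hxP⟩ | hxP <;> rcases mem_subst_T.1 hxT with ⟨-, hxT⟩ | hxT
    · exact disjoint_left.1 hN.1 hxP hxT
    · exact disjoint_left.1 hd (mem_union_left _ hxP) (mem_union_right _ hxT)
    · exact disjoint_left.1 hd (mem_union_right _ hxT) (mem_union_left _ hxP)
    · exact disjoint_left.1 hM.1 hxP hxT
  simp only [mem_subst_P, mem_subst_T]
  rcases mem_subst_F.1 hab with ⟨hab, ha, hb⟩ | hab | ⟨han, hb⟩ | ⟨ha, hnb⟩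
  · rcases hN.2 _ hab with ⟨haP, hbT⟩ | ⟨haT, hbP⟩ <;> tauto
  · rcases hM.2 _ hab with ⟨haP, hbT⟩ | ⟨haT, hbP⟩ <;> tauto
  · rcases hN.2 _ han with ⟨haP, hnT⟩ | ⟨haT, hnP⟩
    · exact .inl ⟨.inl ⟨hN.ne_of_mem_P_of_mem_T haP hnT, haP⟩, .inr ((hT hnT).1 hb)⟩
    · exact .inr ⟨.inl ⟨(hN.ne_of_mem_P_of_mem_T hnP haT).symm, haT⟩, .inr ((hP hnP).1 hb)⟩
  · rcases hN.2 _ hnb with ⟨hnP, hbT⟩ | ⟨hnT, hbP⟩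
    · exact .inl ⟨.inr ((hP hnP).2 ha), .inl ⟨(hN.ne_of_mem_P_of_mem_T hnP hbT).symm, hbT⟩⟩
    · exact .inr ⟨.inr ((hT hnT).2 ha), .inl ⟨hN.ne_of_mem_P_of_mem_T hbP hnT, hbP⟩⟩

lemma Connected.exists_pathReach_I_O (hM : M.Connected) (hne : M.nodes.Nonempty) :
    ∃ i ∈ M.I, ∃ o ∈ M.O, M.pathReach i o := by
  obtain ⟨x, hx⟩ := hne
  obtain ⟨i, hi, hix⟩ := hM.1 x hx
  obtain ⟨o, ho, hxo⟩ := hM.2 x hx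
  exact ⟨i, hi, o, ho, hix.trans hxo⟩

lemma pathReach_subst_of_pathReach_right (h : M.pathReach a b) : (N.subst n M).pathReach a b :=
  Relation.ReflTransGen.mono (fun _ _ hab => mem_subst_F.2 (.inr (.inl hab))) _ _ h

/-- In a lifted path, `n` is entered at `i₀` and left at `o₀`. -/
lemma edge_subst_lift (hloop : ¬ N.edge n n) (hi₀ : i₀ ∈ M.I) (ho₀ : o₀ ∈ M.O)
    (h : N.edge a b) :
    (N.subst n M).edge (if a = n then o₀ else a) (if b = n then i₀ else b) := by
  by_cases ha : a = n <;> by_cases hb : b = n <;> simp only [ha, hb, if_true, if_false]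
  · exact absurd (by rwa [ha, hb] at h) hloop
  · exact mem_subst_F.2 (.inr (.inr (.inr ⟨ho₀, ha ▸ h⟩)))
  · exact mem_subst_F.2 (.inr (.inr (.inl ⟨hb ▸ h, hi₀⟩)))
  · exact mem_subst_F.2 (.inl ⟨h, ha, hb⟩)

lemma pathReach_subst_lift (hloop : ¬ N.edge n n) (hi₀ : i₀ ∈ M.I) (ho₀ : o₀ ∈ M.O)
    (h₀ : M.pathReach i₀ o₀) (h : N.pathReach a b) :
    (N.subst n M).pathReach (if a = n then i₀ else a) (if b = n then o₀ else b) := by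
  have visit (x : ℕ) :
      (N.subst n M).pathReach (if x = n then i₀ else x) (if x = n then o₀ else x) := by
    split_ifs
    exacts [pathReach_subst_of_pathReach_right h₀, .refl]
  induction h with
  | refl => exact visit a
  | tail _ hbc ih => exact ih.trans (.head (edge_subst_lift hloop hi₀ ho₀ hbc) (visit _))

lemma pathReach_subst_to_mem_I (hloop : ¬ N.edge n n) (hi₀ : i₀ ∈ M.I) (ho₀ : o₀ ∈ M.O)
    (h₀ : M.pathReach i₀ o₀) (ha : a ≠ n) (h : N.pathReach a n) {i : ℕ} (hi : i ∈ M.I) :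
    (N.subst n M).pathReach a i := by
  obtain rfl | ⟨c, hac, hcn⟩ := h.cases_tail
  · exact absurd rfl ha
  have hc : c ≠ n := by rintro rfl; exact hloop hcn
  have hlift := pathReach_subst_lift hloop hi₀ ho₀ h₀ hac
  simp only [ha, hc, if_false] at hlift
  exact hlift.tail (mem_subst_F.2 (.inr (.inr (.inl ⟨hcn, hi⟩))))

lemma pathReach_subst_from_mem_O (hloop : ¬ N.edge n n) (hi₀ : i₀ ∈ M.I) (ho₀ : o₀ ∈ M.O)
    (h₀ : M.pathReach i₀ o₀) (hb : b ≠ n) (h : N.pathReach n b) {o : ℕ} (ho : o ∈ M.O) :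
    (N.subst n M).pathReach o b := by
  obtain rfl | ⟨c, hnc, hcb⟩ := h.cases_head
  · exact absurd rfl hb
  have hc : c ≠ n := by rintro rfl; exact hloop hnc
  have hlift := pathReach_subst_lift hloop hi₀ ho₀ h₀ hcb
  simp only [hb, hc, if_false] at hlift
  exact hlift.head (mem_subst_F.2 (.inr (.inr (.inr ⟨ho, hnc⟩))))

theorem Connected.subst (hN : N.Connected) (hn : n ∈ N.nodes) (hloop : ¬ N.edge n n)
    (hM : M.Connected) (hMne : M.nodes.Nonempty) : (N.subst n M).Connected := by
  obtain ⟨i₀, hi₀, o₀, ho₀, h₀⟩ := hM.exists_pathReach_I_O hMne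
  refine ⟨fun x hx => ?_, fun x hx => ?_⟩
  · rcases mem_subst_nodes.1 hx with ⟨hxn, hxN⟩ | hxM
    · obtain ⟨i, hi, hix⟩ := hN.1 x hxN
      have hlift := pathReach_subst_lift hloop hi₀ ho₀ h₀ hix
      simp only [hxn, if_false] at hlift
      refine ⟨_, ?_, hlift⟩
      split_ifs with hin
      exacts [mem_subst_I.2 (.inr ⟨hin ▸ hi, hi₀⟩), mem_subst_I.2 (.inl ⟨hin, hi⟩)]
    · obtain ⟨i, hi, hix⟩ := hM.1 x hxM
      by_cases hnI : n ∈ N.I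
      · exact ⟨i, mem_subst_I.2 (.inr ⟨hnI, hi⟩), pathReach_subst_of_pathReach_right hix⟩
      obtain ⟨j, hj, hjn⟩ := hN.1 n hn
      have hjn' : j ≠ n := by rintro rfl; exact hnI hj
      exact ⟨j, mem_subst_I.2 (.inl ⟨hjn', hj⟩),
        (pathReach_subst_to_mem_I hloop hi₀ ho₀ h₀ hjn' hjn hi).trans
          (pathReach_subst_of_pathReach_right hix)⟩
  · rcases mem_subst_nodes.1 hx with ⟨hxn, hxN⟩ | hxM
    · obtain ⟨o, ho, hxo⟩ := hN.2 x hxN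
      have hlift := pathReach_subst_lift hloop hi₀ ho₀ h₀ hxo
      simp only [hxn, if_false] at hlift
      refine ⟨_, ?_, hlift⟩
      split_ifs with hon
      exacts [mem_subst_O.2 (.inr ⟨hon ▸ ho, ho₀⟩), mem_subst_O.2 (.inl ⟨hon, ho⟩)]
    · obtain ⟨o, ho, hxo⟩ := hM.2 x hxM
      by_cases hnO : n ∈ N.O
      · exact ⟨o, mem_subst_O.2 (.inr ⟨hnO, ho⟩), pathReach_subst_of_pathReach_right hxo⟩
      obtain ⟨j, hj, hnj⟩ := hN.2 n hn
      have hjn' : j ≠ n := by rintro rfl; exact hnO hj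
      exact ⟨j, mem_subst_O.2 (.inl ⟨hjn', hj⟩),
        (pathReach_subst_of_pathReach_right hxo).trans
          (pathReach_subst_from_mem_O hloop hi₀ ho₀ h₀ hjn' hnj ho)⟩

end Net

open Net Finset

theorem stmt5 (N M : Net) (n : ℕ) (hd : Disjoint N.nodes M.nodes)
    (h : (M.IsPWF ∧ n ∈ N.P) ∨ (M.IsTWF ∧ n ∈ N.T)) :
    (N.IsPWF → (N.subst n M).IsPWF) ∧ (N.IsTWF → (N.subst n M).IsTWF) := by
  obtain ⟨hMp, hMI, hMO, hMc, hMne⟩ :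
      M.IsPetri ∧ M.I.Nonempty ∧ M.O.Nonempty ∧ M.Connected ∧ M.nodes.Nonempty := by
    rcases h with ⟨⟨hp, hI, -, hIne, hOne, hc⟩, -⟩ | ⟨⟨hp, hI, -, hIne, hOne, hc⟩, -⟩
    · exact ⟨hp, hIne, hOne, hc, (hIne.mono hI).mono subset_union_left⟩
    · exact ⟨hp, hIne, hOne, hc, (hIne.mono hI).mono subset_union_right⟩
  have hn : n ∈ N.nodes := h.elim (mem_union_left _ ·.2) (mem_union_right _ ·.2)
  have isPWF_of_mem_P (hN : N.IsPetri) (hnP : n ∈ N.P) : M.IsPWF :=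
    h.elim And.left fun h => absurd h.2 (disjoint_left.1 hN.1 hnP)
  have isTWF_of_mem_T (hN : N.IsPetri) (hnT : n ∈ N.T) : M.IsTWF :=
    h.elim (fun h => absurd hnT (disjoint_left.1 hN.1 h.2)) And.left
  have petri (hN : N.IsPetri) : (N.subst n M).IsPetri :=
    hN.subst hd hMp (fun hnP => ⟨(isPWF_of_mem_P hN hnP).2.1, (isPWF_of_mem_P hN hnP).2.2.1⟩)
      (fun hnT => ⟨(isTWF_of_mem_T hN hnT).2.1, (isTWF_of_mem_T hN hnT).2.2.1⟩)
  refine ⟨fun ⟨hN, hI, hO, hIne, hOne, hNc⟩ => ?_, fun ⟨hN, hI, hO, hIne, hOne, hNc⟩ => ?_⟩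
  · exact ⟨petri hN, subst_I_subset hI fun hnI => (isPWF_of_mem_P hN (hI hnI)).2.1,
      subst_O_subset hO fun hnO => (isPWF_of_mem_P hN (hO hnO)).2.2.1, subst_I_nonempty hIne hMI,
      subst_O_nonempty hOne hMO, hNc.subst hn hN.not_edge_self hMc hMne⟩
  · exact ⟨petri hN, subst_I_subset hI fun hnI => (isTWF_of_mem_T hN (hI hnI)).2.1,
      subst_O_subset hO fun hnO => (isTWF_of_mem_T hN (hO hnO)).2.2.1, subst_I_nonempty hIne hMI,
      subst_O_nonempty hOne hMO, hNc.subst hn hN.not_edge_self hMc hMne⟩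
end

section
/- For every pWF net N in which no output place has an outgoing edge, N is *-sound if and only if N is substitution-sound. -/
theorem stmt9 (N : Net) (hN : N.IsPWF)
    (hout : ∀ p ∈ N.O, ∀ t, (p, t) ∉ N.F) :
    N.starSound ↔ N.subSound := by
  have trans_has_input : ∀ t ∈ N.T, ∃ p, (p, t) ∈ N.F := by
    intro t ht
    obtain ⟨hpetri, hI, _, _, _, hconn⟩ := hN
    obtain ⟨i, hiI, hpath⟩ := hconn.1 t (Finset.mem_union_right _ ht)
    rcases hpath.cases_tail with heq | ⟨c, _, hedge⟩
    · exfalso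
      have hiP : i ∈ N.P := hI hiI
      subst heq
      exact Finset.disjoint_left.mp hpetri.1 hiP ht
    · exact ⟨c, hedge⟩
  have reach_add : ∀ (c : Net.Marking), (∀ p, 0 < c p → ∀ t, (p, t) ∉ N.F) →
      ∀ {m m'' : Net.Marking}, N.reach (m + c) m'' →
      ∃ m', m'' = m' + c ∧ N.reach m m' := by
    intro c hc m m'' h
    induction h with
    | refl => exact ⟨m, rfl, Relation.ReflTransGen.refl⟩
    | tail _ hstep ih =>
      obtain ⟨m', rfl, hr⟩ := ih
      obtain ⟨t, ⟨htT, hle⟩, rfl⟩ := hstep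
      have hpre : ∀ p, N.pre t p ≠ 0 → (p, t) ∈ N.F ∧ c p = 0 := by
        intro p hp
        unfold Net.pre at hp
        split at hp
        · refine ⟨‹_›, ?_⟩
          by_contra h0
          exact hc p (Nat.pos_of_ne_zero h0) t ‹_›
        · simp at hp
      refine ⟨N.fire t m', ?_, hr.tail ⟨t, ⟨htT, ?_⟩, rfl⟩⟩
      · funext p
        simp only [Net.fire, Pi.add_apply]
        by_cases hp : N.pre t p = 0
        · omega
        · have h0 : c p = 0 := (hpre p hp).2
          have hle' := hle p
          simp only [Pi.add_apply] at hle'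
          omega
      · intro p
        by_cases hp : N.pre t p = 0
        · simp [hp]
        · have h0 : c p = 0 := (hpre p hp).2
          have hle' := hle p
          simp only [Pi.add_apply] at hle'
          rw [h0, Nat.add_zero] at hle'
          exact hle'
  constructor
  · intro hs k k' hk m hr
    rcases Nat.eq_zero_or_pos k with hk0 | hkpos
    · subst hk0
      have hk'0 : k' = 0 := Nat.le_zero.mp hk
      subst hk'0
      have hm : m + Net.bag 0 N.O = m := by
        funext p; simp [Net.bag]
      rw [hm] at hr
      have hzero : ∀ m', N.reach (Net.bag 0 N.I) m' → m' = Net.bag 0 N.I := by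
        intro m' h
        induction h with
        | refl => rfl
        | tail _ hstep ih =>
          obtain ⟨t, ⟨htT, hle⟩, rfl⟩ := hstep
          exfalso
          obtain ⟨p, hp⟩ := trans_has_input t htT
          rw [ih] at hle
          have := hle p
          simp [Net.bag, Net.pre, hp] at this
      have hmI := hzero m hr
      have hIO : Net.bag 0 N.I = Net.bag (0 - 0) N.O := by
        funext p; simp [Net.bag]
      rw [hmI, hIO]
      exact Relation.ReflTransGen.refl
    · have h1 := hs k hkpos (m + Net.bag k' N.O) hr
      have hc : ∀ p, 0 < Net.bag k' N.O p → ∀ t, (p, t) ∉ N.F := by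
        intro p hp t
        have hpO : p ∈ N.O := by
          by_contra h; simp [Net.bag, h] at hp
        exact hout p hpO t
      obtain ⟨m', heq, hr'⟩ := reach_add _ hc h1
      have hm' : m' = Net.bag (k - k') N.O := by
        funext p
        have := congrFun heq p
        by_cases hpO : p ∈ N.O <;>
          simp only [Pi.add_apply, Net.bag, hpO, if_true, if_false] at this ⊢ <;> omega
      rwa [hm'] at hr'
  · intro hs k _ m hr
    have hm : m + Net.bag 0 N.O = m := by
      funext p; simp [Net.bag]
    have h := hs k 0 (Nat.zero_le k) m (by rwa [hm])
    simpa using h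
end

section
/- For every tWF net N, N is *-sound if and only if N is substitution-sound. -/
namespace Net

lemma pre_po_eq_zero (N : Net) (hN : N.IsTWF) (pi po : ℕ)
    (hpo : po ∉ N.nodes) (hne : pi ≠ po) (t : ℕ) :
    (N.pc pi po).pre t po = 0 := by
  unfold pre pc
  simp only
  rw [if_neg]
  intro h
  simp only [Finset.mem_union, Finset.mem_image] at h
  rcases h with (⟨a, _, ha⟩ | ⟨a, haO, ha⟩) | h
  · exact hne (Prod.mk.injEq .. ▸ ha).1
  · obtain ⟨h1, _⟩ := Prod.mk.injEq .. ▸ ha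
    exact hpo (Finset.mem_union_right _ (hN.2.2.1 (h1 ▸ haO)))
  · rcases hN.1.2 _ h with ⟨hp, _⟩ | ⟨hp, _⟩
    · exact hpo (Finset.mem_union_left _ hp)
    · exact hpo (Finset.mem_union_right _ hp)

lemma reach_add_cancel (M : Net) (c : Marking)
    (hc : ∀ t p, c p ≠ 0 → M.pre t p = 0) :
    ∀ {a b}, M.reach a b → ∀ m, a = m + c → ∃ m', b = m' + c ∧ M.reach m m' := by
  intro a b hab
  induction hab with
  | refl => exact fun m hm => ⟨m, hm, .refl⟩
  | tail hbc hstep ih =>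
    intro m hm
    obtain ⟨m', hb, hre⟩ := ih m hm
    obtain ⟨t, ⟨htT, hpre⟩, hfire⟩ := hstep
    subst hb hfire
    refine ⟨M.fire t m', ?_, hre.tail ⟨t, ⟨htT, ?_⟩, rfl⟩⟩
    · funext p
      by_cases h : c p = 0
      · simp [fire, Pi.add_apply, h]
      · have h0 := hc t p h
        simp only [fire, Pi.add_apply, h0]
        omega
    · intro p
      by_cases h : c p = 0
      · have := hpre p; simp only [Pi.add_apply, h, add_zero] at this; exact this
      · simp [hc t p h]

lemma no_step_zero (N : Net) (hN : N.IsTWF) (pi po : ℕ) (hpi : pi ∉ N.nodes)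
    (z : Marking) (hz : ∀ p, z p = 0) (m' : Marking) :
    ¬ (N.pc pi po).stepRel z m' := by
  rintro ⟨t, ⟨htT, hpre⟩, -⟩
  have htT' : t ∈ N.T := htT
  have hconn := hN.2.2.2.2.2.1 t (Finset.mem_union_right _ htT')
  -- find an input place of t in pc
  have : ∃ p, ((N.pc pi po).pre t) p = 1 := by
    by_cases hI : t ∈ N.I
    · refine ⟨pi, ?_⟩
      unfold pre pc
      simp only
      rw [if_pos]
      exact Finset.mem_union_left _ (Finset.mem_union_left _
        (Finset.mem_image.2 ⟨t, hI, rfl⟩))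
    · obtain ⟨i, hiI, hpath⟩ := hconn
      rcases Relation.ReflTransGen.cases_tail hpath with h | ⟨x, _, hxt⟩
      · exact absurd (h ▸ hiI) hI
      · refine ⟨x, ?_⟩
        unfold pre pc
        simp only
        rw [if_pos]
        exact Finset.mem_union_right _ hxt
  obtain ⟨p, hp⟩ := this
  have h1 : ((N.pc pi po).pre t) p ≤ z p := hpre p
  rw [hp, hz p] at h1
  exact absurd h1 (by norm_num)

lemma reach_zero (N : Net) (hN : N.IsTWF) (pi po : ℕ) (hpi : pi ∉ N.nodes)
    (z : Marking) (hz : ∀ p, z p = 0) (m : Marking) :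
    (N.pc pi po).reach z m → m = z := by
  intro h
  rcases Relation.ReflTransGen.cases_head h with h | ⟨b, hstep, _⟩
  · exact h.symm
  · exact absurd hstep (N.no_step_zero hN pi po hpi z hz b)

end Net

theorem stmt10 (N : Net) (hN : N.IsTWF) : N.tStarSound ↔ N.tSubSound := by
  constructor
  · intro hstar pi po hpi hpo hne k k' hkk m hm
    set M := N.pc pi po with hM
    have hMO : M.O = {po} := rfl
    have hMI : M.I = {pi} := rfl
    rcases Nat.eq_zero_or_pos k with hk0 | hk1
    · subst hk0
      have hk'0 : k' = 0 := Nat.le_zero.mp hkk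
      subst hk'0
      have hz : ∀ p, Net.bag 0 M.I p = 0 := by intro p; simp [Net.bag]
      have hm0 := N.reach_zero hN pi po hpi _ hz _ hm
      have h1 : m = Net.bag (0 - 0) M.O := by
        funext p
        have h2 := congrFun hm0 p
        simp only [Pi.add_apply, Net.bag, ite_self, add_zero] at h2
        simp [Net.bag, h2]
      exact h1 ▸ Relation.ReflTransGen.refl
    · have hre : M.reach (m + Net.bag k' M.O) (Net.bag k M.O) :=
        hstar pi po hpi hpo hne k hk1 _ hm
      have hc : ∀ t p, Net.bag k' M.O p ≠ 0 → M.pre t p = 0 := by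
        intro t p hp
        have : p = po := by
          by_contra hpp
          apply hp
          simp [Net.bag, hMO, hpp]
        rw [this]
        exact N.pre_po_eq_zero hN pi po hpo hne t
      obtain ⟨m', hb, hre'⟩ := M.reach_add_cancel _ hc hre _ rfl
      have : m' = Net.bag (k - k') M.O := by
        funext p
        have := congrFun hb p
        simp only [Pi.add_apply] at this
        by_cases hpp : p = po <;> simp [Net.bag, hMO, hpp] at this ⊢ <;> omega
      exact this ▸ hre'
  · intro hsub pi po hpi hpo hne k hk1 m hm
    have h := hsub pi po hpi hpo hne k 0 (Nat.zero_le k) m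
    have hz : m + Net.bag 0 (N.pc pi po).O = m := by
      funext p; simp [Net.bag]
    rw [hz] at h
    simpa using h hm
end

section
/- For every tWF net N with a place p and a disjoint pWF net M, place completion commutes with place substitution: pc(N ⊗_p M) = pc(N) ⊗_p M. -/
theorem stmt11 (N M : Net) (p : ℕ) (hN : N.IsTWF) (hM : M.IsPWF)
    (hp : p ∈ N.P) (hd : Disjoint N.nodes M.nodes)
    (pi po : ℕ) (hpi : pi ∉ N.nodes ∪ M.nodes) (hpo : po ∉ N.nodes ∪ M.nodes)
    (hne : pi ≠ po) :
    (N.subst p M).pc pi po = (N.pc pi po).subst p M := by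
  have hPT := hN.1.1
  have hIT := hN.2.1
  have hOT := hN.2.2.1
  have hpT : p ∉ N.T := fun h => (Finset.disjoint_left.mp hPT hp) h
  have hpN : p ∈ N.nodes := Finset.mem_union_left _ hp
  have hpiN : pi ∉ N.nodes := fun h => hpi (Finset.mem_union_left _ h)
  have hpoN : po ∉ N.nodes := fun h => hpo (Finset.mem_union_left _ h)
  have hppi : p ≠ pi := fun h => hpiN (h ▸ hpN)
  have hppo : p ≠ po := fun h => hpoN (h ▸ hpN)
  have hpI : p ∉ N.I := fun h => hpT (hIT h)
  have hpO : p ∉ N.O := fun h => hpT (hOT h)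
  have hIp : ∀ t ∈ N.I, t ≠ p := fun t ht h => hpT (h ▸ hIT ht)
  have hOp : ∀ t ∈ N.O, t ≠ p := fun t ht h => hpT (h ▸ hOT ht)
  have hin : (N.pc pi po).inEdges p = N.inEdges p := by
    ext x
    simp only [Net.inEdges, Net.pc, Finset.mem_image, Finset.mem_filter,
      Finset.mem_union, Prod.exists]
    constructor
    · rintro ⟨a, b, ⟨h | h, hb⟩, rfl⟩
      · rcases h with h | h
        · obtain ⟨t, ht, heq⟩ := h
          obtain ⟨h1, h2⟩ := Prod.mk.inj heq
          exact (hIp t ht (h2.trans hb)).elim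
        · obtain ⟨t, ht, heq⟩ := h
          obtain ⟨h1, h2⟩ := Prod.mk.inj heq
          exact (hppo (h2.trans hb).symm).elim
      · exact ⟨a, b, ⟨h, hb⟩, rfl⟩
    · rintro ⟨a, b, ⟨h, hb⟩, rfl⟩
      exact ⟨a, b, ⟨Or.inr h, hb⟩, rfl⟩
  have hout : (N.pc pi po).outEdges p = N.outEdges p := by
    ext x
    simp only [Net.outEdges, Net.pc, Finset.mem_image, Finset.mem_filter,
      Finset.mem_union, Prod.exists]
    constructor
    · rintro ⟨a, b, ⟨h | h, ha⟩, rfl⟩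
      · rcases h with h | h
        · obtain ⟨t, ht, heq⟩ := h
          obtain ⟨h1, h2⟩ := Prod.mk.inj heq
          exact (hppi (h1.trans ha).symm).elim
        · obtain ⟨t, ht, heq⟩ := h
          obtain ⟨h1, h2⟩ := Prod.mk.inj heq
          exact (hOp t ht (h1.trans ha)).elim
      · exact ⟨a, b, ⟨h, ha⟩, rfl⟩
    · rintro ⟨a, b, ⟨h, ha⟩, rfl⟩
      exact ⟨a, b, ⟨Or.inr h, ha⟩, rfl⟩
  have hsubI : (N.subst p M).I = N.I := by simp [Net.subst, hpI]
  have hsubO : (N.subst p M).O = N.O := by simp [Net.subst, hpO]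
  show Net.mk _ _ _ _ _ = Net.mk _ _ _ _ _
  simp only [Net.mk.injEq]
  refine ⟨?_, ?_, ?_, ?_, ?_⟩
  · -- places
    show insert pi (insert po ((N.P.erase p) ∪ M.P))
        = ((insert pi (insert po N.P)).erase p) ∪ M.P
    ext x
    simp only [Finset.mem_insert, Finset.mem_union, Finset.mem_erase]
    constructor
    · rintro (rfl | rfl | ⟨hx, hxP⟩ | hxM)
      · exact Or.inl ⟨hppi.symm, Or.inl rfl⟩
      · exact Or.inl ⟨hppo.symm, Or.inr (Or.inl rfl)⟩
      · exact Or.inl ⟨hx, Or.inr (Or.inr hxP)⟩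
      · exact Or.inr hxM
    · rintro (⟨hx, rfl | rfl | hxP⟩ | hxM)
      · exact Or.inl rfl
      · exact Or.inr (Or.inl rfl)
      · exact Or.inr (Or.inr (Or.inl ⟨hx, hxP⟩))
      · exact Or.inr (Or.inr (Or.inr hxM))
  · rfl
  · -- flow
    show (((N.subst p M).I.image fun t => (pi, t)) ∪ ((N.subst p M).O.image fun t => (t, po))
          ∪ (N.subst p M).F)
        = (((N.pc pi po).F.filter fun e => e.1 ≠ p ∧ e.2 ≠ p) ∪ M.F
            ∪ ((N.pc pi po).inEdges p ×ˢ M.I) ∪ (M.O ×ˢ (N.pc pi po).outEdges p))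
    rw [hsubI, hsubO, hin, hout]
    ext e
    simp only [Net.pc, Net.subst, Finset.mem_union, Finset.mem_filter, Finset.mem_image]
    constructor
    · rintro ((h | h) | (((h | h) | h) | h))
      · refine Or.inl (Or.inl (Or.inl ?_))
        obtain ⟨t, ht, rfl⟩ := h
        exact ⟨Or.inl (Or.inl ⟨t, ht, rfl⟩), hppi.symm, hIp t ht⟩
      · refine Or.inl (Or.inl (Or.inl ?_))
        obtain ⟨t, ht, rfl⟩ := h
        exact ⟨Or.inl (Or.inr ⟨t, ht, rfl⟩), hOp t ht, hppo.symm⟩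
      · exact Or.inl (Or.inl (Or.inl ⟨Or.inr h.1, h.2⟩))
      · exact Or.inl (Or.inl (Or.inr h))
      · exact Or.inl (Or.inr h)
      · exact Or.inr h
    · rintro ((((⟨(h | h) | h, h1, h2⟩) | h) | h) | h)
      · obtain ⟨t, ht, rfl⟩ := h
        exact Or.inl (Or.inl ⟨t, ht, rfl⟩)
      · obtain ⟨t, ht, rfl⟩ := h
        exact Or.inl (Or.inr ⟨t, ht, rfl⟩)
      · exact Or.inr (Or.inl (Or.inl (Or.inl ⟨h, h1, h2⟩)))
      · exact Or.inr (Or.inl (Or.inl (Or.inr h)))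
      · exact Or.inr (Or.inl (Or.inr h))
      · exact Or.inr (Or.inr h)
  · simp [Net.pc, Net.subst, hppi]
  · simp [Net.pc, Net.subst, hppo]
end

section
/- If a pWF net N and a disjoint pWF net M are both substitution-sound, then for any place p of N, the net N ⊗_p M is substitution-sound. -/
open Finset in
lemma bag_zero (S : Finset ℕ) : Net.bag 0 S = 0 := by
  funext q; simp [Net.bag]

lemma bag_add (x y : ℕ) (S : Finset ℕ) :
    Net.bag (x + y) S = Net.bag x S + Net.bag y S := by
  funext q; simp only [Net.bag, Pi.add_apply]; split <;> simp

lemma fire_add_ctx (X : Net) (t : ℕ) (m c : Net.Marking) (h : X.pre t ≤ m) :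
    X.fire t (m + c) = X.fire t m + c := by
  funext q; have h2 : X.pre t q ≤ m q := h q
  simp only [Net.fire, Pi.add_apply]
  omega

lemma step_add (X : Net) {m m' : Net.Marking} (c : Net.Marking)
    (h : X.stepRel m m') : X.stepRel (m + c) (m' + c) := by
  obtain ⟨t, ⟨ht, hpre⟩, rfl⟩ := h
  exact ⟨t, ⟨ht, le_trans hpre (by intro q; simp [Pi.add_apply])⟩,
    (fire_add_ctx X t m c hpre).symm⟩

lemma reach_add (X : Net) {m m' : Net.Marking} (c : Net.Marking)
    (h : X.reach m m') : X.reach (m + c) (m' + c) := by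
  induction h with
  | refl => exact Relation.ReflTransGen.refl
  | tail _ h2 ih => exact ih.tail (step_add X c h2)

lemma trans_out {M : Net} (hM : M.IsPWF) {t : ℕ} (ht : t ∈ M.T) :
    ∃ q, (t, q) ∈ M.F := by
  obtain ⟨hpet, hIP, hOP, hIne, hOne, hconn⟩ := hM
  obtain ⟨o, ho, hpath⟩ := hconn.2 t (Finset.mem_union_right _ ht)
  have hpath' : Relation.ReflTransGen M.edge t o := hpath
  rcases Relation.ReflTransGen.cases_head hpath' with heq | ⟨q, hq, _⟩
  · exact absurd (hOP (heq ▸ ho)) (Finset.disjoint_right.mp hpet.1 ht)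
  · exact ⟨q, hq⟩

lemma reach_zero_eq {M : Net} (hM : M.IsPWF) {v : Net.Marking}
    (h : M.reach v 0) : v = 0 := by
  rcases Relation.ReflTransGen.cases_tail h with heq | ⟨u, _, t, ⟨ht, _⟩, hfire⟩
  · exact heq.symm
  · exfalso
    obtain ⟨q, hq⟩ := trans_out hM ht
    have := congrFun hfire q
    simp only [Net.fire, Net.post, hq, if_pos, Pi.zero_apply] at this
    omega

lemma cover {M : Net} (hM : M.IsPWF) (hsM : M.subSound) {a c : ℕ} {v : Net.Marking}
    (h : M.reach (Net.bag a M.I) (v + Net.bag c M.O)) : c ≤ a := by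
  by_contra hc
  push_neg at hc
  have hdecomp : v + Net.bag c M.O = (v + Net.bag (c - a) M.O) + Net.bag a M.O := by
    funext q; simp only [Pi.add_apply, Net.bag]; split <;> omega
  rw [hdecomp] at h
  have := hsM a a le_rfl _ h
  rw [Nat.sub_self, bag_zero] at this
  have h0 := reach_zero_eq hM this
  obtain ⟨o, ho⟩ := hM.2.2.2.2.1
  have := congrFun h0 o
  simp only [Pi.add_apply, Net.bag, ho, if_pos, Pi.zero_apply] at this
  omega

lemma unit_run {M : Net} (hsM : M.subSound) :
    M.reach (Net.bag 1 M.I) (Net.bag 1 M.O) := by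
  have := hsM 1 0 (by omega) (Net.bag 1 M.I)
    (by rw [bag_zero, add_zero]; exact Relation.ReflTransGen.refl)
  simpa using this

/-- restriction of a marking to the complement of M's places, with value `c` at `p` -/
def nproj (M : Net) (p : ℕ) (u : Net.Marking) (c : ℕ) : Net.Marking :=
  fun q => if q ∈ M.P then 0 else if q = p then c else u q

/-- restriction of a marking to M's places -/
def mproj (M : Net) (u : Net.Marking) : Net.Marking :=
  fun q => if q ∈ M.P then u q else 0

lemma mem_substF (N M : Net) (p : ℕ) (x y : ℕ) :
    ((x, y) ∈ (N.subst p M).F) ↔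
      (((x, y) ∈ N.F ∧ x ≠ p ∧ y ≠ p) ∨ (x, y) ∈ M.F ∨
       ((x, p) ∈ N.F ∧ y ∈ M.I) ∨ (x ∈ M.O ∧ (p, y) ∈ N.F)) := by
  simp only [Net.subst, Net.inEdges, Net.outEdges, Finset.mem_union, Finset.mem_filter,
    Finset.mem_product, Finset.mem_image, Prod.exists]
  aesop

lemma F_nodes {X : Net} (hX : X.IsPetri) {x y : ℕ} (h : (x, y) ∈ X.F) :
    x ∈ X.nodes ∧ y ∈ X.nodes := by
  rcases hX.2 _ h with ⟨h1, h2⟩ | ⟨h1, h2⟩ <;>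
    exact ⟨by simp [Net.nodes, Finset.mem_union]; tauto,
           by simp [Net.nodes, Finset.mem_union]; tauto⟩

lemma substT (N M : Net) (p : ℕ) (hN : N.IsPWF) (hp : p ∈ N.P) :
    (N.subst p M).T = N.T ∪ M.T := by
  have : p ∉ N.T := Finset.disjoint_left.mp hN.1.1 hp
  simp [Net.subst, Finset.erase_eq_of_notMem this]

section Struct
variable {N M : Net} {p : ℕ} (hN : N.IsPWF) (hM : M.IsPWF)
  (hd : Disjoint N.nodes M.nodes) (hp : p ∈ N.P)

include hN hM hd hp

lemma F_ne_p {x y : ℕ} (h : (x, y) ∈ (N.subst p M).F) : x ≠ p ∧ y ≠ p := by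
  have hpN : p ∈ N.nodes := Finset.mem_union_left _ hp
  have hpM : p ∉ M.nodes := Finset.disjoint_left.mp hd hpN
  have hpT : p ∉ N.T := Finset.disjoint_left.mp hN.1.1 hp
  rcases (mem_substF N M p x y).mp h with ⟨_, h1, h2⟩ | h | ⟨h1, h2⟩ | ⟨h1, h2⟩
  · exact ⟨h1, h2⟩
  · have := F_nodes hM.1 h
    exact ⟨fun e => hpM (e ▸ this.1), fun e => hpM (e ▸ this.2)⟩
  · constructor
    · rintro rfl
      rcases hN.1.2 _ h1 with ⟨_, h4⟩ | ⟨h3, _⟩ <;> exact hpT (by assumption)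
    · rintro rfl
      exact hpM (Finset.mem_union_left _ (hM.2.1 h2))
  · constructor
    · rintro rfl
      exact hpM (Finset.mem_union_left _ (hM.2.2.1 h1))
    · rintro rfl
      rcases hN.1.2 _ h2 with ⟨h3, _⟩ | ⟨_, h4⟩ <;> exact hpT (by assumption)

lemma pre_subst_M {t : ℕ} (ht : t ∈ M.T) :
    (N.subst p M).pre t = M.pre t := by
  have htM : t ∈ M.nodes := Finset.mem_union_right _ ht
  have htN : t ∉ N.nodes := Finset.disjoint_right.mp hd htM
  funext q
  have hiff : ((q, t) ∈ (N.subst p M).F) ↔ (q, t) ∈ M.F := by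
    rw [mem_substF]
    constructor
    · rintro (⟨h, _, _⟩ | h | ⟨_, h2⟩ | ⟨_, h2⟩)
      · exact absurd (F_nodes hN.1 h).2 htN
      · exact h
      · exact absurd (hM.2.1 h2) (Finset.disjoint_right.mp hM.1.1 ht)
      · exact absurd (F_nodes hN.1 h2).2 htN
    · exact fun h => Or.inr (Or.inl h)
  simp only [Net.pre, hiff]

lemma post_subst_M {t : ℕ} (ht : t ∈ M.T) :
    (N.subst p M).post t = M.post t := by
  have htM : t ∈ M.nodes := Finset.mem_union_right _ ht
  have htN : t ∉ N.nodes := Finset.disjoint_right.mp hd htM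
  funext q
  have hiff : ((t, q) ∈ (N.subst p M).F) ↔ (t, q) ∈ M.F := by
    rw [mem_substF]
    constructor
    · rintro (⟨h, _, _⟩ | h | ⟨h1, _⟩ | ⟨h1, _⟩)
      · exact absurd (F_nodes hN.1 h).1 htN
      · exact h
      · exact absurd (F_nodes hN.1 h1).1 htN
      · exact absurd (hM.2.2.1 h1) (Finset.disjoint_right.mp hM.1.1 ht)
    · exact fun h => Or.inr (Or.inl h)
  simp only [Net.post, hiff]

lemma pre_subst_N {t : ℕ} (ht : t ∈ N.T) :
    (N.subst p M).pre t =
      fun q => if q ∈ M.O then N.pre t p else if q = p then 0 else N.pre t q := by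
  have htN : t ∈ N.nodes := Finset.mem_union_right _ ht
  have htM : t ∉ M.nodes := Finset.disjoint_left.mp hd htN
  have htp : t ≠ p := fun e => (Finset.disjoint_left.mp hN.1.1 hp) (e ▸ ht)
  funext q
  have hiff : ((q, t) ∈ (N.subst p M).F) ↔
      (((q, t) ∈ N.F ∧ q ≠ p) ∨ (q ∈ M.O ∧ (p, t) ∈ N.F)) := by
    rw [mem_substF]
    constructor
    · rintro (⟨h, h1, _⟩ | h | ⟨_, h2⟩ | ⟨h1, h2⟩)
      · exact Or.inl ⟨h, h1⟩
      · exact absurd (F_nodes hM.1 h).2 htM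
      · exact absurd (Finset.mem_union_left _ (hM.2.1 h2)) htM
      · exact Or.inr ⟨h1, h2⟩
    · rintro (⟨h, h1⟩ | ⟨h1, h2⟩)
      · exact Or.inl ⟨h, h1, htp⟩
      · exact Or.inr (Or.inr (Or.inr ⟨h1, h2⟩))
  simp only [Net.pre, hiff]
  by_cases hO : q ∈ M.O
  · have hqM : q ∈ M.nodes := Finset.mem_union_left _ (hM.2.2.1 hO)
    have hqN : q ∉ N.nodes := Finset.disjoint_right.mp hd hqM
    have : (q, t) ∉ N.F := fun h => hqN (F_nodes hN.1 h).1
    simp [hO, this]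
  · simp only [if_neg hO]
    by_cases hqp : q = p
    · have hpM : p ∉ M.nodes := Finset.disjoint_left.mp hd (Finset.mem_union_left _ hp)
      have hpO : p ∉ M.O := fun h => hpM (Finset.mem_union_left _ (hM.2.2.1 h))
      simp [hqp, hpO]
    · simp [hO, hqp]

lemma post_subst_N {t : ℕ} (ht : t ∈ N.T) :
    (N.subst p M).post t =
      fun q => if q ∈ M.I then N.post t p else if q = p then 0 else N.post t q := by
  have htN : t ∈ N.nodes := Finset.mem_union_right _ ht
  have htM : t ∉ M.nodes := Finset.disjoint_left.mp hd htN
  have htp : t ≠ p := fun e => (Finset.disjoint_left.mp hN.1.1 hp) (e ▸ ht)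
  funext q
  have hiff : ((t, q) ∈ (N.subst p M).F) ↔
      (((t, q) ∈ N.F ∧ q ≠ p) ∨ ((t, p) ∈ N.F ∧ q ∈ M.I)) := by
    rw [mem_substF]
    constructor
    · rintro (⟨h, _, h2⟩ | h | ⟨h1, h2⟩ | ⟨h1, _⟩)
      · exact Or.inl ⟨h, h2⟩
      · exact absurd (F_nodes hM.1 h).1 htM
      · exact Or.inr ⟨h1, h2⟩
      · exact absurd (Finset.mem_union_left _ (hM.2.2.1 h1)) htM
    · rintro (⟨h, h1⟩ | ⟨h1, h2⟩)
      · exact Or.inl ⟨h, htp, h1⟩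
      · exact Or.inr (Or.inr (Or.inl ⟨h1, h2⟩))
  simp only [Net.post, hiff]
  by_cases hI : q ∈ M.I
  · have hqM : q ∈ M.nodes := Finset.mem_union_left _ (hM.2.1 hI)
    have hqN : q ∉ N.nodes := Finset.disjoint_right.mp hd hqM
    have : (t, q) ∉ N.F := fun h => hqN (F_nodes hN.1 h).2
    simp [hI, this]
  · simp only [if_neg hI]
    by_cases hqp : q = p
    · have hpM : p ∉ M.nodes := Finset.disjoint_left.mp hd (Finset.mem_union_left _ hp)
      have hpI : p ∉ M.I := fun h => hpM (Finset.mem_union_left _ (hM.2.1 h))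
      simp [hqp, hpI]
    · simp [hI, hqp]

end Struct

lemma pre_mem {X : Net} (hX : X.IsPetri) {t q : ℕ} (ht : t ∈ X.T) (hq : q ∉ X.P) :
    X.pre t q = 0 := by
  simp only [Net.pre, ite_eq_right_iff]
  intro h
  rcases hX.2 _ h with ⟨h1, _⟩ | ⟨_, h2⟩
  · exact absurd h1 hq
  · exact absurd ht (Finset.disjoint_left.mp hX.1 h2)

lemma post_mem {X : Net} (hX : X.IsPetri) {t q : ℕ} (ht : t ∈ X.T) (hq : q ∉ X.P) :
    X.post t q = 0 := by
  simp only [Net.post, ite_eq_right_iff]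
  intro h
  rcases hX.2 _ h with ⟨h1, _⟩ | ⟨_, h2⟩
  · exact absurd ht (Finset.disjoint_left.mp hX.1 h1)
  · exact absurd h2 hq

lemma pre_le_one (X : Net) (t q : ℕ) : X.pre t q ≤ 1 := by
  simp only [Net.pre]; split <;> omega

lemma post_le_one (X : Net) (t q : ℕ) : X.post t q ≤ 1 := by
  simp only [Net.post]; split <;> omega

section Main
variable {N M : Net} {p : ℕ} (hN : N.IsPWF) (hM : M.IsPWF)
  (hd : Disjoint N.nodes M.nodes) (hp : p ∈ N.P) (hsM : M.subSound)

include hN hM hd hp hsM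

set_option linter.unusedSectionVars false

lemma fwd_inv (k : ℕ) {u : Net.Marking}
    (h : (N.subst p M).reach (Net.bag k (N.subst p M).I) u) :
    ∃ a b : ℕ, b ≤ a ∧
      N.reach (Net.bag k N.I) (nproj M p u (a - b)) ∧
      M.reach (Net.bag a M.I) (mproj M u + Net.bag b M.O) := by
  have hNMP : ∀ q ∈ N.P, q ∉ M.P := fun q hq hq2 =>
    Finset.disjoint_left.mp hd (Finset.mem_union_left _ hq) (Finset.mem_union_left _ hq2)
  have hMNP : ∀ q ∈ M.P, q ∉ N.P := fun q hq hq2 => hNMP q hq2 hq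
  have hpM : p ∉ M.P := hNMP p hp
  induction h with
  | refl =>
    by_cases hpI : p ∈ N.I
    · refine ⟨k, 0, Nat.zero_le k, ?_, ?_⟩
      · have he : nproj M p (Net.bag k (N.subst p M).I) (k - 0) = Net.bag k N.I := by
          funext q
          simp only [nproj, Net.bag, Net.subst, if_pos hpI, Finset.mem_union,
            Finset.mem_erase]
          by_cases h1 : q ∈ M.P
          · have : q ∉ N.I := fun h => hNMP q (hN.2.1 h) h1
            simp [h1, this]
          · by_cases h2 : q = p
            · simp [h1, h2, hpI, hpM, Nat.sub_zero]
            · have : q ∉ M.I := fun h => h1 (hM.2.1 h)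
              simp [h1, h2, this]
        rw [he]
        exact Relation.ReflTransGen.refl
      · have he : mproj M (Net.bag k (N.subst p M).I) + Net.bag 0 M.O
            = Net.bag k M.I := by
          rw [bag_zero, add_zero]
          funext q
          simp only [mproj, Net.bag, Net.subst, if_pos hpI, Finset.mem_union,
            Finset.mem_erase]
          by_cases h1 : q ∈ M.P
          · have : q ∉ N.I := fun h => hNMP q (hN.2.1 h) h1
            by_cases h2 : q ∈ M.I <;> simp [h1, h2, this]
          · have : q ∉ M.I := fun h => h1 (hM.2.1 h)
            simp [h1, this]
        rw [he]
        exact Relation.ReflTransGen.refl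
    · refine ⟨0, 0, le_rfl, ?_, ?_⟩
      · have he : nproj M p (Net.bag k (N.subst p M).I) (0 - 0) = Net.bag k N.I := by
          funext q
          simp only [nproj, Net.bag, Net.subst, if_neg hpI]
          by_cases h1 : q ∈ M.P
          · have : q ∉ N.I := fun h => hNMP q (hN.2.1 h) h1
            simp [h1, this]
          · by_cases h2 : q = p
            · simp [h1, h2, hpI, hpM]
            · simp [h1, h2]
        rw [he]
        exact Relation.ReflTransGen.refl
      · have he : mproj M (Net.bag k (N.subst p M).I) + Net.bag 0 M.O
            = Net.bag 0 M.I := by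
          rw [bag_zero, bag_zero, add_zero]
          funext q
          simp only [mproj, Net.bag, Net.subst, if_neg hpI, Pi.zero_apply]
          by_cases h1 : q ∈ M.P
          · have : q ∉ N.I := fun h => hNMP q (hN.2.1 h) h1
            simp [h1, this]
          · simp [h1]
        rw [he]
        exact Relation.ReflTransGen.refl
  | @tail v u h1 h2 ih =>
    obtain ⟨a, b, hba, hNr, hMr⟩ := ih
    obtain ⟨t, ⟨htT, hpre⟩, rfl⟩ := h2
    rw [substT N M p hN hp, Finset.mem_union] at htT
    rcases htT with htN | htM
    · -- transition of N
      have hpreK := pre_subst_N hN hM hd hp htN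
      have hpostK := post_subst_N hN hM hd hp htN
      have hα1 : N.pre t p ≤ 1 := pre_le_one N t p
      have hβ1 : N.post t p ≤ 1 := post_le_one N t p
      -- claim : N.pre t p ≤ a - b
      have hcl : N.pre t p ≤ a - b := by
        by_cases hpt : (p, t) ∈ N.F
        · have hα : N.pre t p = 1 := by simp [Net.pre, hpt]
          have hOu : ∀ q ∈ M.O, 1 ≤ v q := by
            intro q hq
            have h3 : (N.subst p M).pre t q ≤ v q := hpre q
            rw [hpreK] at h3
            simpa [hq, hα] using h3
          have hsplit : mproj M v + Net.bag b M.O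
              = ((fun q => mproj M v q - (if q ∈ M.O then 1 else 0)) : Net.Marking)
                + Net.bag (b + 1) M.O := by
            funext q
            simp only [Pi.add_apply, Net.bag, mproj]
            by_cases hq : q ∈ M.O
            · have hq2 : q ∈ M.P := hM.2.2.1 hq
              have := hOu q hq
              simp only [hq, hq2, if_pos]
              omega
            · simp [hq]
          rw [hsplit] at hMr
          have := cover hM hsM hMr
          omega
        · have : N.pre t p = 0 := by simp [Net.pre, hpt]
          omega
      refine ⟨a + N.post t p, b + N.pre t p, by omega, ?_, ?_⟩
      · refine hNr.tail ⟨t, ⟨htN, ?_⟩, ?_⟩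
        · intro q
          by_cases h3 : q ∈ M.P
          · rw [pre_mem hN.1 htN (hMNP q h3)]
            exact Nat.zero_le _
          · by_cases h4 : q = p
            · subst h4
              simpa [nproj, h3] using hcl
            · have : N.pre t q ≤ v q := by
                have h5 := hpre q
                rw [hpreK] at h5
                have hqO : q ∉ M.O := fun h => h3 (hM.2.2.1 h)
                simpa [hqO, h4] using h5
              simpa [nproj, h3, h4] using this
        · funext q
          simp only [nproj, Net.fire]
          by_cases h3 : q ∈ M.P
          · rw [pre_mem hN.1 htN (hMNP q h3), post_mem hN.1 htN (hMNP q h3)]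
            simp [h3]
          · by_cases h4 : q = p
            · subst h4
              simp only [if_neg h3]
              simp only [ite_true, if_pos rfl]
              omega
            · have hqO : q ∉ M.O := fun h => h3 (hM.2.2.1 h)
              have hqI : q ∉ M.I := fun h => h3 (hM.2.1 h)
              simp only [if_neg h3, if_neg h4, hpreK, hpostK]
              simp [hqO, hqI, h4]
      · have hadd := reach_add M (Net.bag (N.post t p) M.I) hMr
        rw [← bag_add] at hadd
        have he : mproj M ((N.subst p M).fire t v) + Net.bag (b + N.pre t p) M.O
            = mproj M v + Net.bag b M.O + Net.bag (N.post t p) M.I := by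
          funext q
          simp only [Pi.add_apply, mproj, Net.fire, Net.bag, hpreK, hpostK]
          by_cases h3 : q ∈ M.P
          · have h4 : q ≠ p := fun e => hpM (e ▸ h3)
            have hvq : (if q ∈ M.O then N.pre t p else if q = p then 0 else N.pre t q)
                ≤ v q := by
              have h5 := hpre q
              rw [hpreK] at h5
              exact h5
            have hNpre0 : N.pre t q = 0 := pre_mem hN.1 htN (hMNP q h3)
            have hNpost0 : N.post t q = 0 := post_mem hN.1 htN (hMNP q h3)
            by_cases hO : q ∈ M.O <;> by_cases hI : q ∈ M.I <;>
              simp only [hO, hI, h3, h4, ite_true, ite_false] at hvq ⊢ <;> omega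
          · have hO : q ∉ M.O := fun h => h3 (hM.2.2.1 h)
            have hI : q ∉ M.I := fun h => h3 (hM.2.1 h)
            simp [h3, hO, hI]
        rw [he]
        exact hadd
    · -- transition of M
      have hpreK := pre_subst_M hN hM hd hp htM
      have hpostK := post_subst_M hN hM hd hp htM
      refine ⟨a, b, hba, ?_, ?_⟩
      · have he : nproj M p ((N.subst p M).fire t v) (a - b) = nproj M p v (a - b) := by
          funext q
          simp only [nproj, Net.fire, hpreK, hpostK]
          by_cases h3 : q ∈ M.P
          · simp [h3]
          · rw [pre_mem hM.1 htM h3, post_mem hM.1 htM h3]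
            by_cases h4 : q = p <;> simp [h3, h4]
        rw [he]; exact hNr
      · refine hMr.tail ⟨t, ⟨htM, ?_⟩, ?_⟩
        · intro q
          by_cases h3 : q ∈ M.P
          · have h5 : M.pre t q ≤ v q := by
              have := hpre q; rwa [hpreK] at this
            simp only [Pi.add_apply, mproj, if_pos h3]
            omega
          · rw [pre_mem hM.1 htM h3]
            exact Nat.zero_le _
        · funext q
          simp only [Pi.add_apply, mproj, Net.fire, hpreK, hpostK, Net.bag]
          by_cases h3 : q ∈ M.P
          · have h5 : M.pre t q ≤ v q := by
              have := hpre q; rwa [hpreK] at this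
            by_cases hO : q ∈ M.O <;>
              simp only [h3, hO, ite_true, ite_false, if_pos, if_neg,
                if_true, if_false] <;> omega
          · have hO : q ∉ M.O := fun h => h3 (hM.2.2.1 h)
            rw [pre_mem hM.1 htM h3, post_mem hM.1 htM h3]
            simp [h3, hO]
end Main

section Lift
variable {N M : Net} {p : ℕ} (hN : N.IsPWF) (hM : M.IsPWF)
  (hd : Disjoint N.nodes M.nodes) (hp : p ∈ N.P) (hsM : M.subSound)

set_option linter.unusedSectionVars false

include hN hM hd hp

lemma lift_M_step {v v' : Net.Marking} (c : Net.Marking) (h : M.stepRel v v') :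
    (N.subst p M).stepRel (v + c) (v' + c) := by
  obtain ⟨t, ⟨ht, hpre⟩, rfl⟩ := h
  refine ⟨t, ⟨?_, ?_⟩, ?_⟩
  · rw [substT N M p hN hp]; exact Finset.mem_union_right _ ht
  · rw [pre_subst_M hN hM hd hp ht]
    intro q
    have h2 : M.pre t q ≤ v q := hpre q
    simp only [Pi.add_apply]
    omega
  · funext q
    have h2 : M.pre t q ≤ v q := hpre q
    simp only [Net.fire, Pi.add_apply, pre_subst_M hN hM hd hp ht,
      post_subst_M hN hM hd hp ht]
    omega

lemma lift_M_reach {v v' : Net.Marking} (c : Net.Marking) (h : M.reach v v') :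
    (N.subst p M).reach (v + c) (v' + c) := by
  induction h with
  | refl => exact Relation.ReflTransGen.refl
  | tail _ h2 ih => exact ih.tail (lift_M_step hN hM hd hp c h2)

include hsM

lemma lift_N_step {n n' : Net.Marking} (h : N.stepRel n n') :
    (N.subst p M).reach (nproj M p n 0 + Net.bag (n p) M.O)
      (nproj M p n' 0 + Net.bag (n' p) M.O) := by
  have hNMP : ∀ q ∈ N.P, q ∉ M.P := fun q hq hq2 =>
    Finset.disjoint_left.mp hd (Finset.mem_union_left _ hq) (Finset.mem_union_left _ hq2)
  have hMNP : ∀ q ∈ M.P, q ∉ N.P := fun q hq hq2 => hNMP q hq2 hq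
  have hpM : p ∉ M.P := hNMP p hp
  have hpO : p ∉ M.O := fun h => hpM (hM.2.2.1 h)
  have hpI : p ∉ M.I := fun h => hpM (hM.2.1 h)
  obtain ⟨t, ⟨ht, hpreN⟩, rfl⟩ := h
  have hpreK := pre_subst_N hN hM hd hp ht
  have hpostK := post_subst_N hN hM hd hp ht
  have hα : N.pre t p ≤ n p := hpreN p
  have hstepA : (N.subst p M).stepRel (nproj M p n 0 + Net.bag (n p) M.O)
      ((nproj M p (N.fire t n) 0 + Net.bag (n p - N.pre t p) M.O)
        + Net.bag (N.post t p) M.I) := by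
    refine ⟨t, ⟨?_, ?_⟩, ?_⟩
    · rw [substT N M p hN hp]; exact Finset.mem_union_left _ ht
    · rw [hpreK]
      intro q
      simp only [Pi.add_apply, nproj, Net.bag]
      by_cases h3 : q ∈ M.P
      · have h4 : q ≠ p := fun e => hpM (e ▸ h3)
        have h5 : N.pre t q = 0 := pre_mem hN.1 ht (hMNP q h3)
        by_cases hO : q ∈ M.O <;> simp only [h3, h4, hO, ite_true, ite_false] <;> omega
      · have hO : q ∉ M.O := fun h => h3 (hM.2.2.1 h)
        by_cases h4 : q = p
        · subst h4
          simp only [h3, hO, ite_true, ite_false]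
          omega
        · have h6 : N.pre t q ≤ n q := hpreN q
          simp only [h3, h4, hO, ite_true, ite_false]
          omega
    · funext q
      simp only [Net.fire, Pi.add_apply, nproj, Net.bag, hpreK, hpostK]
      by_cases h3 : q ∈ M.P
      · have h4 : q ≠ p := fun e => hpM (e ▸ h3)
        have h5 : N.pre t q = 0 := pre_mem hN.1 ht (hMNP q h3)
        have h6 : N.post t q = 0 := post_mem hN.1 ht (hMNP q h3)
        by_cases hO : q ∈ M.O <;> by_cases hI : q ∈ M.I <;>
          simp only [h3, h4, hO, hI, ite_true, ite_false] <;> omega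
      · have hO : q ∉ M.O := fun h => h3 (hM.2.2.1 h)
        have hI : q ∉ M.I := fun h => h3 (hM.2.1 h)
        by_cases h4 : q = p
        · subst h4
          simp only [h3, hO, hI, ite_true, ite_false]
        · have h6 : N.pre t q ≤ n q := hpreN q
          simp only [h3, h4, hO, hI, ite_true, ite_false]
          omega
  refine (Relation.ReflTransGen.single hstepA).trans ?_
  by_cases hβ : (t, p) ∈ N.F
  · have hb1 : N.post t p = 1 := by simp [Net.post, hβ]
    have hrun := lift_M_reach hN hM hd hp
      (nproj M p (N.fire t n) 0 + Net.bag (n p - N.pre t p) M.O) (unit_run hsM)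
    have he1 : Net.bag 1 M.I + (nproj M p (N.fire t n) 0 + Net.bag (n p - N.pre t p) M.O)
        = (nproj M p (N.fire t n) 0 + Net.bag (n p - N.pre t p) M.O)
          + Net.bag (N.post t p) M.I := by
      rw [hb1, add_comm]
    have he2 : Net.bag 1 M.O + (nproj M p (N.fire t n) 0 + Net.bag (n p - N.pre t p) M.O)
        = nproj M p (N.fire t n) 0 + Net.bag (N.fire t n p) M.O := by
      have : N.fire t n p = (n p - N.pre t p) + 1 := by
        simp [Net.fire, hb1]
      rw [this, bag_add, add_comm, add_assoc]
    rw [he1, he2] at hrun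
    exact hrun
  · have hb0 : N.post t p = 0 := by simp [Net.post, hβ]
    have he : (nproj M p (N.fire t n) 0 + Net.bag (n p - N.pre t p) M.O)
          + Net.bag (N.post t p) M.I
        = nproj M p (N.fire t n) 0 + Net.bag (N.fire t n p) M.O := by
      have : N.fire t n p = n p - N.pre t p := by
        simp [Net.fire, hb0]
      rw [hb0, bag_zero, add_zero, this]
    rw [he]

lemma lift_N_reach {n n' : Net.Marking} (h : N.reach n n') :
    (N.subst p M).reach (nproj M p n 0 + Net.bag (n p) M.O)
      (nproj M p n' 0 + Net.bag (n' p) M.O) := by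
  induction h with
  | refl => exact Relation.ReflTransGen.refl
  | tail _ h2 ih => exact ih.trans (lift_N_step hN hM hd hp hsM h2)

omit hsM

lemma reach_p_zero (k : ℕ) {u : Net.Marking}
    (h : (N.subst p M).reach (Net.bag k (N.subst p M).I) u) : u p = 0 := by
  have hpM : p ∉ M.nodes :=
    Finset.disjoint_left.mp hd (Finset.mem_union_left _ hp)
  induction h with
  | refl =>
    by_cases hpI : p ∈ N.I
    · have h1 : p ∉ M.I := fun h => hpM (Finset.mem_union_left _ (hM.2.1 h))
      simp [Net.bag, Net.subst, hpI, h1]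
    · simp [Net.bag, Net.subst, hpI]
  | tail _ h2 ih =>
    obtain ⟨t, ⟨ht, hpre⟩, rfl⟩ := h2
    have h1 : (p, t) ∉ (N.subst p M).F := fun h =>
      (F_ne_p hN hM hd hp h).1 rfl
    have h2 : (t, p) ∉ (N.subst p M).F := fun h =>
      (F_ne_p hN hM hd hp h).2 rfl
    simp [Net.fire, Net.pre, Net.post, h1, h2, ih]

end Lift

section Final
variable {N M : Net} {p : ℕ} (hN : N.IsPWF) (hM : M.IsPWF)
  (hd : Disjoint N.nodes M.nodes) (hp : p ∈ N.P) (hsM : M.subSound)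

set_option linter.unusedSectionVars false

include hN hM hd hp hsM

lemma assemble {m : Net.Marking} (hmp : m p = 0) (c k'' : ℕ)
    (hMrun : M.reach (mproj M m) (Net.bag c M.O))
    (hNrun : N.reach (nproj M p m c) (Net.bag k'' N.O)) :
    (N.subst p M).reach m
      (nproj M p (Net.bag k'' N.O) 0 + Net.bag (Net.bag k'' N.O p) M.O) := by
  have hNMP : ∀ q ∈ N.P, q ∉ M.P := fun q hq hq2 =>
    Finset.disjoint_left.mp hd (Finset.mem_union_left _ hq) (Finset.mem_union_left _ hq2)
  have hpM : p ∉ M.P := hNMP p hp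
  have hpO : p ∉ M.O := fun h => hpM (hM.2.2.1 h)
  have step1 := lift_M_reach hN hM hd hp (nproj M p m 0) hMrun
  have e3 : mproj M m + nproj M p m 0 = m := by
    funext q
    simp only [Pi.add_apply, mproj, nproj]
    by_cases h3 : q ∈ M.P
    · simp [h3]
    · by_cases h4 : q = p
      · subst h4; simp [h3, hmp]
      · simp [h3, h4]
  have e4 : Net.bag c M.O + nproj M p m 0
      = nproj M p (nproj M p m c) 0 + Net.bag (nproj M p m c p) M.O := by
    have hc : nproj M p m c p = c := by simp [nproj, hpM]
    rw [hc]
    funext q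
    simp only [Pi.add_apply, nproj]
    by_cases h3 : q ∈ M.P
    · simp [h3]
    · by_cases h4 : q = p
      · subst h4
        simp [h3, Net.bag, hpO]
      · simp [h3, h4, Nat.add_comm]
  rw [e3, e4] at step1
  exact step1.trans (lift_N_reach hN hM hd hp hsM hNrun)

end Final

theorem stmt12 (N M : Net) (p : ℕ) (hN : N.IsPWF) (hM : M.IsPWF)
    (hd : Disjoint N.nodes M.nodes) (hp : p ∈ N.P)
    (hsN : N.subSound) (hsM : M.subSound) : (N.subst p M).subSound := by
  intro k k' hk m hreach
  have hNMP : ∀ q ∈ N.P, q ∉ M.P := fun q hq hq2 =>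
    Finset.disjoint_left.mp hd (Finset.mem_union_left _ hq) (Finset.mem_union_left _ hq2)
  have hMNP : ∀ q ∈ M.P, q ∉ N.P := fun q hq hq2 => hNMP q hq2 hq
  have hpM : p ∉ M.P := hNMP p hp
  have hpO : p ∉ M.O := fun h => hpM (hM.2.2.1 h)
  have hNOP : ∀ q ∈ N.O, q ∉ M.P := fun q hq => hNMP q (hN.2.2.1 hq)
  obtain ⟨a, b, hba, hNr, hMr⟩ := fwd_inv hN hM hd hp hsM k hreach
  have hmp : m p = 0 := by
    have h0 := reach_p_zero hN hM hd hp k hreach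
    have h1 : m p + Net.bag k' (N.subst p M).O p = 0 := h0
    have h2 : Net.bag k' (N.subst p M).O p = 0 := by
      by_cases hpNO : p ∈ N.O <;>
        simp [Net.subst, Net.bag, hpNO, hpO, Finset.mem_union, Finset.mem_erase]
    omega
  by_cases hpNO : p ∈ N.O
  · -- p is an output place of N
    have hKO : (N.subst p M).O = (N.O.erase p) ∪ M.O := by simp [Net.subst, hpNO]
    have e2 : mproj M (m + Net.bag k' (N.subst p M).O) + Net.bag b M.O
        = mproj M m + Net.bag (b + k') M.O := by
      funext q
      simp only [mproj, Pi.add_apply, hKO, Net.bag, Finset.mem_union, Finset.mem_erase]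
      by_cases h3 : q ∈ M.P
      · have hqNO : q ∉ N.O := fun h => hNOP q h h3
        by_cases hO : q ∈ M.O <;> simp [h3, hO, hqNO] <;> omega
      · have hO : q ∉ M.O := fun h => h3 (hM.2.2.1 h)
        simp [h3, hO]
    rw [e2] at hMr
    have hbk : b + k' ≤ a := cover hM hsM hMr
    have hMrun := hsM a (b + k') hbk _ hMr
    have e1 : nproj M p (m + Net.bag k' (N.subst p M).O) (a - b)
        = nproj M p m (a - b - k') + Net.bag k' N.O := by
      funext q
      simp only [nproj, Pi.add_apply, hKO, Net.bag, Finset.mem_union, Finset.mem_erase]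
      by_cases h3 : q ∈ M.P
      · have hqNO : q ∉ N.O := fun h => hNOP q h h3
        simp [h3, hqNO]
      · by_cases h4 : q = p
        · subst h4
          simp [h3, hpNO, hpO]
          omega
        · have hO : q ∉ M.O := fun h => h3 (hM.2.2.1 h)
          simp [h3, h4, hO]
    rw [e1] at hNr
    have hNrun := hsN k k' hk _ hNr
    have e6 : a - (b + k') = a - b - k' := by omega
    rw [e6] at hMrun
    have hA := assemble hN hM hd hp hsM hmp (a - b - k') (k - k') hMrun hNrun
    have e5 : nproj M p (Net.bag (k - k') N.O) 0
          + Net.bag (Net.bag (k - k') N.O p) M.O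
        = Net.bag (k - k') (N.subst p M).O := by
      have hbp : Net.bag (k - k') N.O p = k - k' := by simp [Net.bag, hpNO]
      rw [hbp, hKO]
      funext q
      simp only [nproj, Pi.add_apply, Net.bag, Finset.mem_union, Finset.mem_erase]
      by_cases h3 : q ∈ M.P
      · have hqNO : q ∉ N.O := fun h => hNOP q h h3
        by_cases hO : q ∈ M.O <;> simp [h3, hO, hqNO]
      · have hO : q ∉ M.O := fun h => h3 (hM.2.2.1 h)
        by_cases h4 : q = p
        · subst h4
          simp [h3, hO, hpO]
        · simp [h3, h4, hO]
    rwa [e5] at hA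
  · -- p is not an output place of N
    have hKO : (N.subst p M).O = N.O := by simp [Net.subst, hpNO]
    have e1 : nproj M p (m + Net.bag k' (N.subst p M).O) (a - b)
        = nproj M p m (a - b) + Net.bag k' N.O := by
      funext q
      simp only [nproj, Pi.add_apply, hKO, Net.bag]
      by_cases h3 : q ∈ M.P
      · have hqNO : q ∉ N.O := fun h => hNOP q h h3
        simp [h3, hqNO]
      · by_cases h4 : q = p
        · subst h4; simp [h3, hpNO]
        · simp [h3, h4]
    rw [e1] at hNr
    have hNrun := hsN k k' hk _ hNr
    have e2 : mproj M (m + Net.bag k' (N.subst p M).O) = mproj M m := by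
      funext q
      simp only [mproj, Pi.add_apply, hKO, Net.bag]
      by_cases h3 : q ∈ M.P
      · have hqNO : q ∉ N.O := fun h => hNOP q h h3
        simp [h3, hqNO]
      · simp [h3]
    rw [e2] at hMr
    have hMrun := hsM a b hba _ hMr
    have hA := assemble hN hM hd hp hsM hmp (a - b) (k - k') hMrun hNrun
    have e5 : nproj M p (Net.bag (k - k') N.O) 0
          + Net.bag (Net.bag (k - k') N.O p) M.O
        = Net.bag (k - k') (N.subst p M).O := by
      have hbp : Net.bag (k - k') N.O p = 0 := by simp [Net.bag, hpNO]
      rw [hbp, bag_zero, add_zero, hKO]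
      funext q
      simp only [nproj, Net.bag]
      by_cases h3 : q ∈ M.P
      · have hqNO : q ∉ N.O := fun h => hNOP q h h3
        simp [h3, hqNO]
      · by_cases h4 : q = p
        · subst h4; simp [h3, hpNO]
        · simp [h3, h4]
    rwa [e5] at hA
end
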